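/- arXiv:1407.1422 — 13 statements merged into one kernel-verified Lean document; each statement's English description precedes it below -/
import Mathlib

section
/- Let H = (V, C, D) be an (ℓ, m)-uniform mixed hypergraph with |V| ≥ ℓ - 1. If H has a proper coloring using exactly a colors where 2 ≤ a ≤ ℓ - 1, then for every s with a ≤ s ≤ ℓ - 1, H has a proper coloring using exactly s colors. -/
/-- A coloring is proper for a mixed hypergraph `(C, D)` if every `C`-edge has two
vertices of the same color and every `D`-edge has two vertices of distinct colors. -/
def Proper {V : Type} (C D : Set (Finset V)) (c : V → ℕ) : Prop :=
  (∀ e ∈ C, ∃ u ∈ e, ∃ v ∈ e, u ≠ v ∧ c u = c v) ∧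
  (∀ e ∈ D, ∃ u ∈ e, ∃ v ∈ e, c u ≠ c v)

/-- A coloring uses exactly `s` colors. -/
def UsesExactly {V : Type} [Fintype V] [DecidableEq V] (c : V → ℕ) (s : ℕ) : Prop :=
  (Finset.univ.image c).card = s

/-!
Refine `c` one color at a time until it uses exactly `s` colors. Refining never merges two colors,
so every `D`-edge stays polychromatic; and since `s < ℓ`, pigeonhole puts a repeated color on
every `C`-edge.
-/

open Finset Function

section Refinement

variable {V β : Type*} [Fintype V] [DecidableEq β]

lemma exists_ne_map_eq_of_card_image_lt (c : V → β) {e : Finset V}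
    (he : #(univ.image c) < #e) : ∃ u ∈ e, ∃ v ∈ e, u ≠ v ∧ c u = c v :=
  exists_ne_map_eq_of_card_lt_of_maps_to he fun x _ => mem_image_of_mem c (mem_univ x)

variable [DecidableEq V]

lemma image_update_univ_of_map_eq {c : V → β} {u v : V} (huv : u ≠ v) (hc : c u = c v) (b : β) :
    univ.image (update c u b) = insert b (univ.image c) := by
  ext z
  simp only [mem_image, mem_univ, true_and, mem_insert, update_apply]
  constructor
  · rintro ⟨w, rfl⟩
    split_ifs <;> simp_all
  · rintro (rfl | ⟨w, rfl⟩)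
    · exact ⟨u, if_pos rfl⟩
    · by_cases hw : w = u
      · exact ⟨v, by simp [huv.symm, hw, hc]⟩
      · exact ⟨w, if_neg hw⟩

/-- Two vertices sharing a color exist by pigeonhole; recoloring one of them with a fresh color
adds exactly one color and separates no pair that was already separated. -/
lemma exists_refinement_card_image_succ [Infinite β] (c : V → β)
    (hc : #(univ.image c) < Fintype.card V) :
    ∃ c' : V → β, (∀ x y, c x ≠ c y → c' x ≠ c' y) ∧
      #(univ.image c') = #(univ.image c) + 1 := by
  obtain ⟨u, -, v, -, huv, hcuv⟩ := exists_ne_map_eq_of_card_image_lt c (e := univ) hc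
  obtain ⟨b, hb⟩ := Infinite.exists_notMem_finset (univ.image c)
  have hb' : ∀ x, c x ≠ b := fun x h => hb (h ▸ mem_image_of_mem c (mem_univ x))
  refine ⟨update c u b, fun x y hxy => ?_, ?_⟩
  · simp only [update_apply]
    split_ifs <;> simp_all [Ne.symm]
  · rw [image_update_univ_of_map_eq huv hcuv, card_insert_of_notMem hb]

lemma exists_refinement_card_image_eq [Infinite β] (c : V → β) {s : ℕ}
    (hcs : #(univ.image c) ≤ s) (hs : s ≤ Fintype.card V) :
    ∃ c' : V → β, (∀ x y, c x ≠ c y → c' x ≠ c' y) ∧ #(univ.image c') = s := by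
  induction s, hcs using Nat.le_induction with
  | base => exact ⟨c, fun _ _ => id, rfl⟩
  | succ n _ ih =>
    obtain ⟨c₁, hc₁, hn⟩ := ih (by omega)
    obtain ⟨c₂, hc₂, hn'⟩ := exists_refinement_card_image_succ c₁ (by omega)
    exact ⟨c₂, fun x y h => hc₂ x y (hc₁ x y h), hn ▸ hn'⟩

end Refinement

theorem stmt3_general {V : Type} [Fintype V] [DecidableEq V] (C D : Set (Finset V)) (ℓ : ℕ)
    (hC : ∀ e ∈ C, e.card = ℓ)
    (hV : ℓ - 1 ≤ Fintype.card V) (a : ℕ) (ha2 : 2 ≤ a) (hal : a ≤ ℓ - 1)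
    (c : V → ℕ) (hc : Proper C D c) (hca : UsesExactly c a) :
    ∀ s : ℕ, a ≤ s → s ≤ ℓ - 1 →
      ∃ c' : V → ℕ, Proper C D c' ∧ UsesExactly c' s := by
  intro s has hsl
  obtain ⟨c', hrefine, hcard⟩ := exists_refinement_card_image_eq c (hca ▸ has) (by omega)
  refine ⟨c', ⟨fun e he => ?_, fun e he => ?_⟩, hcard⟩
  · exact exists_ne_map_eq_of_card_image_lt c' (by rw [hcard, hC e he]; omega)
  · obtain ⟨u, hu, v, hv, huv⟩ := hc.2 e he
    exact ⟨u, hu, v, hv, hrefine u v huv⟩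

theorem stmt3 {V : Type} [Fintype V] [DecidableEq V] (C D : Set (Finset V)) (ℓ m : ℕ)
    (hC : ∀ e ∈ C, e.card = ℓ) (hD : ∀ e ∈ D, e.card = m)
    (hV : ℓ - 1 ≤ Fintype.card V) (a : ℕ) (ha2 : 2 ≤ a) (hal : a ≤ ℓ - 1)
    (c : V → ℕ) (hc : Proper C D c) (hca : UsesExactly c a) :
    ∀ s : ℕ, a ≤ s → s ≤ ℓ - 1 →
      ∃ c' : V → ℕ, Proper C D c' ∧ UsesExactly c' s :=
  stmt3_general C D ℓ hC hV a ha2 hal c hc hca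
end

section
/- Let ℓ = 2 and let H = (V, C, D) be a (2, m)-uniform mixed hypergraph. Then the feasible set S(H) = { s : H has a proper coloring with exactly s colors } is an interval of integers (possibly empty). -/
open Finset

lemma pair_const {V : Type} [DecidableEq V] (e : Finset V) (he : e.card = 2) (c : V → ℕ)
    (h : ∃ u ∈ e, ∃ v ∈ e, u ≠ v ∧ c u = c v) :
    ∀ x ∈ e, ∀ y ∈ e, c x = c y := by
  obtain ⟨u, hu, v, hv, huv, hc⟩ := h
  have hsub : ({u, v} : Finset V) ⊆ e := by
    intro x hx
    rcases Finset.mem_insert.mp hx with rfl | hx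
    · exact hu
    · rwa [Finset.mem_singleton.mp hx]
  have hcard : ({u, v} : Finset V).card = 2 := Finset.card_pair huv
  have he2 : e = {u, v} := (Finset.eq_of_subset_of_card_le hsub (by omega)).symm
  intro x hx y hy
  rw [he2] at hx hy
  rcases Finset.mem_insert.mp hx with rfl | hx <;>
  rcases Finset.mem_insert.mp hy with rfl | hy <;>
    first
      | rfl
      | (try rw [Finset.mem_singleton.mp hx]) <;> (try rw [Finset.mem_singleton.mp hy]) <;>
        simp_all

lemma step_lemma {V : Type} [Fintype V] [DecidableEq V] (C D : Set (Finset V))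
    (hC2 : ∀ e ∈ C, e.card = 2) (p : V → ℕ)
    (hpC : ∀ e ∈ C, ∀ x ∈ e, ∀ y ∈ e, p x = p y) (f : ℕ → ℕ)
    (hf : Proper C D (fun x => f (p x)))
    (hlt : (univ.image (fun x => f (p x))).card < (univ.image p).card) :
    ∃ g : ℕ → ℕ, Proper C D (fun x => g (p x)) ∧
      (univ.image (fun x => g (p x))).card = (univ.image (fun x => f (p x))).card + 1 := by
  classical
  -- there exist v w with f (p v) = f (p w) but p v ≠ p w
  have himg : (univ.image (fun x => f (p x))) = (univ.image p).image f := by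
    rw [Finset.image_image]; rfl
  have hnotinj : ¬ (∀ a ∈ univ.image p, ∀ b ∈ univ.image p, f a = f b → a = b) := by
    intro hinj
    rw [himg, Finset.card_image_of_injOn hinj] at hlt
    omega
  push_neg at hnotinj
  obtain ⟨a, ha, b, hb, hfab, hab⟩ := hnotinj
  obtain ⟨v, -, hv⟩ := Finset.mem_image.mp ha
  obtain ⟨w, -, hw⟩ := Finset.mem_image.mp hb
  subst hv; subst hw
  set N : ℕ := (univ.image (fun x => f (p x))).sup id + 1 with hN
  have hNfresh : N ∉ univ.image (fun x => f (p x)) := by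
    intro hmem
    have := Finset.le_sup (f := id) hmem
    simp only [id] at this
    omega
  refine ⟨fun n => if n = p v then N else f n, ⟨?_, ?_⟩, ?_⟩
  · -- C-edges
    intro e he
    obtain ⟨x, hx, y, hy, hxy, -⟩ := hf.1 e he
    exact ⟨x, hx, y, hy, hxy, by simp only; rw [hpC e he x hx y hy]⟩
  · -- D-edges
    intro e he
    obtain ⟨x, hx, y, hy, hxy⟩ := hf.2 e he
    refine ⟨x, hx, y, hy, ?_⟩
    simp only
    by_cases h1 : p x = p v <;> by_cases h2 : p y = p v
    · exfalso; apply hxy; show f (p x) = f (p y); rw [h1, h2]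
    · simp only [h1, h2, if_true, if_false]
      intro hcon
      exact hNfresh (by rw [hcon]; exact Finset.mem_image_of_mem _ (Finset.mem_univ y))
    · simp only [h1, h2, if_true, if_false]
      intro hcon
      exact hNfresh (by rw [← hcon]; exact Finset.mem_image_of_mem _ (Finset.mem_univ x))
    · simpa [h1, h2] using hxy
  · -- cardinality
    have himg2 : (univ.image (fun x => (if p x = p v then N else f (p x)))) =
        insert N (univ.image (fun x => f (p x))) := by
      apply Finset.Subset.antisymm
      · intro n hn
        obtain ⟨x, -, hx⟩ := Finset.mem_image.mp hn
        by_cases h1 : p x = p v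
        · simp only [h1, if_true] at hx
          exact hx ▸ Finset.mem_insert_self _ _
        · simp only [h1, if_false] at hx
          exact Finset.mem_insert_of_mem (hx ▸ Finset.mem_image_of_mem _ (Finset.mem_univ x))
      · intro n hn
        rcases Finset.mem_insert.mp hn with rfl | hn
        · exact Finset.mem_image.mpr ⟨v, Finset.mem_univ v, by simp⟩
        · obtain ⟨x, -, hx⟩ := Finset.mem_image.mp hn
          by_cases h1 : p x = p v
          · -- then f (p x) = f (p v) = f (p w), and p w ≠ p v
            refine Finset.mem_image.mpr ⟨w, Finset.mem_univ w, ?_⟩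
            have : p w ≠ p v := fun h => hab (h.symm)
            simp only [this, if_false]
            rw [← hx, h1, hfab]
          · exact Finset.mem_image.mpr ⟨x, Finset.mem_univ x, by simp [h1, hx]⟩
    rw [show (fun x => (if p x = p v then N else f (p x))) =
          (fun x => (fun n => if n = p v then N else f n) (p x)) from rfl] at himg2
    rw [himg2, Finset.card_insert_of_notMem hNfresh]

lemma interp {V : Type} [Fintype V] [DecidableEq V] (C D : Set (Finset V))
    (hC2 : ∀ e ∈ C, e.card = 2) (p : V → ℕ)
    (hpC : ∀ e ∈ C, ∀ x ∈ e, ∀ y ∈ e, p x = p y) :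
    ∀ j (f : ℕ → ℕ), Proper C D (fun x => f (p x)) →
      (univ.image (fun x => f (p x))).card + j ≤ (univ.image p).card →
      ∃ g : ℕ → ℕ, Proper C D (fun x => g (p x)) ∧
        (univ.image (fun x => g (p x))).card = (univ.image (fun x => f (p x))).card + j := by
  intro j
  induction j with
  | zero => intro f hf _; exact ⟨f, hf, by simp⟩
  | succ k ih =>
    intro f hf hle
    obtain ⟨g, hg, hgcard⟩ := ih f hf (by omega)
    obtain ⟨g', hg', hg'card⟩ := step_lemma C D hC2 p hpC g hg (by omega)
    exact ⟨g', hg', by omega⟩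

theorem stmt4 {V : Type} [Fintype V] [DecidableEq V] (C D : Set (Finset V)) (m : ℕ)
    (hm : 2 ≤ m) (hC : ∀ e ∈ C, e.card = 2) (hD : ∀ e ∈ D, e.card = m) :
    ∀ s t u : ℕ,
      (∃ c : V → ℕ, Proper C D c ∧ UsesExactly c s) →
      (∃ c : V → ℕ, Proper C D c ∧ UsesExactly c t) →
      s ≤ u → u ≤ t →
      ∃ c : V → ℕ, Proper C D c ∧ UsesExactly c u := by
  intro s t u ⟨cs, hcs, hcss⟩ ⟨ct, hct, hctt⟩ hsu hut
  classical
  set p : V → ℕ := fun x => Nat.pair (cs x) (ct x) with hp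
  have hcs_eq : cs = fun x => (Nat.unpair (p x)).1 := by
    funext x; simp [hp, Nat.unpair_pair]
  have hct_eq : ct = fun x => (Nat.unpair (p x)).2 := by
    funext x; simp [hp, Nat.unpair_pair]
  have hpC : ∀ e ∈ C, ∀ x ∈ e, ∀ y ∈ e, p x = p y := by
    intro e he x hx y hy
    have h1 := pair_const e (hC e he) cs (hcs.1 e he) x hx y hy
    have h2 := pair_const e (hC e he) ct (hct.1 e he) x hx y hy
    simp [hp, h1, h2]
  -- t ≤ card of image of p
  have ht_le : t ≤ (univ.image p).card := by
    have : univ.image ct = (univ.image p).image (fun n => (Nat.unpair n).2) := by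
      rw [Finset.image_image, hct_eq]; rfl
    calc t = (univ.image ct).card := hctt.symm
      _ = ((univ.image p).image (fun n => (Nat.unpair n).2)).card := by rw [this]
      _ ≤ (univ.image p).card := Finset.card_image_le
  have hcs_proper : Proper C D (fun x => (fun n : ℕ => (Nat.unpair n).1) (p x)) :=
    hcs_eq ▸ hcs
  have hcs_card : (univ.image (fun x => (fun n : ℕ => (Nat.unpair n).1) (p x))).card = s := by
    simp only [hp, Nat.unpair_pair]; exact hcss
  obtain ⟨g, hg, hgcard⟩ := interp C D hC p hpC (u - s) (fun n => (Nat.unpair n).1)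
    hcs_proper (by rw [hcs_card]; omega)
  rw [hcs_card] at hgcard
  exact ⟨fun x => g (p x), hg, by unfold UsesExactly; omega⟩
end

section
/- Let H be an (ℓ, m)-uniform mixed hypergraph with ℓ ≥ 2, |V(H)| ≥ ℓ, and suppose H has a proper coloring with exactly s colors for some s with s + 1 < ℓ. Then H has at least two non-isomorphic proper colorings with exactly s + 1 colors. -/
theorem stmt6 {V : Type} [Fintype V] [DecidableEq V] (C D : Set (Finset V)) (ℓ m : ℕ)
    (hl : 2 ≤ ℓ) (hC : ∀ e ∈ C, e.card = ℓ) (hD : ∀ e ∈ D, e.card = m)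
    (hV : ℓ ≤ Fintype.card V) (s : ℕ) (hs : s + 1 < ℓ)
    (c : V → ℕ) (hc : Proper C D c) (hcs : UsesExactly c s) :
    ∃ c₁ c₂ : V → ℕ,
      Proper C D c₁ ∧ UsesExactly c₁ (s + 1) ∧
      Proper C D c₂ ∧ UsesExactly c₂ (s + 1) ∧
      ¬ (∀ u v : V, c₁ u = c₁ v ↔ c₂ u = c₂ v) := by
  classical
  have hcs' : (Finset.univ.image c).card = s := hcs
  have hV2 : s + 2 ≤ Fintype.card V := by omega
  set N : ℕ := (Finset.univ.image c).sup id + 1 with hNdef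
  have hN : ∀ v, c v ≠ N := by
    intro v h
    have hm : c v ∈ Finset.univ.image c := Finset.mem_image_of_mem c (Finset.mem_univ v)
    have h2 := Finset.le_sup (f := id) hm
    simp only [id] at h2
    omega
  have hNnotmem : N ∉ Finset.univ.image c := by
    intro h
    obtain ⟨v, -, hv⟩ := Finset.mem_image.mp h
    exact hN v hv
  -- key construction lemma
  have key : ∀ (p : V → Prop) (_ : DecidablePred p),
      (∀ u v, p u → p v → c u = c v) →
      (∃ x, p x) →
      (∀ k ∈ Finset.univ.image c, ∃ w, ¬ p w ∧ c w = k) →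
      Proper C D (fun w => if p w then N else c w) ∧
        UsesExactly (fun w => if p w then N else c w) (s + 1) := by
    intro p _ hsame ⟨x0, hx0⟩ hsurv
    set c' : V → ℕ := fun w => if p w then N else c w with hc'
    have href : ∀ u v, c' u = c' v → c u = c v := by
      intro u v h
      simp only [hc'] at h
      by_cases hu : p u <;> by_cases hv : p v <;> simp [hu, hv] at h
      · exact hsame u v hu hv
      · exact absurd h.symm (hN v)
      · exact absurd h (hN u)
      · exact h
    have himg : Finset.univ.image c' = insert N (Finset.univ.image c) := by
      ext k
      simp only [Finset.mem_insert, Finset.mem_image, Finset.mem_univ, true_and]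
      constructor
      · rintro ⟨w, hw⟩
        by_cases hpw : p w
        · left; simp [hc', hpw] at hw; omega
        · right; exact ⟨w, by simpa [hc', hpw] using hw⟩
      · rintro (rfl | ⟨w, hw⟩)
        · exact ⟨x0, by simp [hc', hx0]⟩
        · obtain ⟨w', hpw', hw'⟩ := hsurv k (Finset.mem_image.mpr ⟨w, Finset.mem_univ w, hw⟩)
          exact ⟨w', by simp [hc', hpw', hw']⟩
    have hcard : (Finset.univ.image c').card = s + 1 := by
      rw [himg, Finset.card_insert_of_notMem hNnotmem, hcs']
    refine ⟨⟨?_, ?_⟩, hcard⟩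
    · intro e he
      have hcardE : e.card = ℓ := hC e he
      have hlt : (Finset.univ.image c').card < e.card := by omega
      obtain ⟨u, hu, v, hv, huv, heq⟩ := Finset.exists_ne_map_eq_of_card_lt_of_maps_to hlt
        (fun w _ => Finset.mem_image_of_mem c' (Finset.mem_univ w))
      exact ⟨u, hu, v, hv, huv, heq⟩
    · intro e he
      obtain ⟨u, hu, v, hv, hne⟩ := hc.2 e he
      exact ⟨u, hu, v, hv, fun h => hne (href u v h)⟩
  -- find two vertices of the same color
  have hmaps : ∀ w ∈ Finset.univ, c w ∈ Finset.univ.image c :=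
    fun w _ => Finset.mem_image_of_mem c (Finset.mem_univ w)
  have hltV : (Finset.univ.image c).card < (Finset.univ : Finset V).card := by
    rw [hcs', Finset.card_univ]; omega
  obtain ⟨x, -, y, -, hxy, hcxy⟩ := Finset.exists_ne_map_eq_of_card_lt_of_maps_to hltV hmaps
  by_cases h3 : ∃ z, z ≠ x ∧ z ≠ y ∧ c z = c x
  · -- a color class of size ≥ 3: split off {x} vs split off {x, y}
    obtain ⟨z, hzx, hzy, hcz⟩ := h3
    obtain ⟨hp1, hu1⟩ := key (fun w => w = x) (by infer_instance)
      (by rintro u v rfl rfl; rfl) ⟨x, rfl⟩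
      (by
        intro k hk
        obtain ⟨w, -, hw⟩ := Finset.mem_image.mp hk
        by_cases hwx : w = x
        · exact ⟨y, fun h => hxy h.symm, by rw [← hcxy, ← hw, hwx]⟩
        · exact ⟨w, hwx, hw⟩)
    obtain ⟨hp2, hu2⟩ := key (fun w => w = x ∨ w = y) (by infer_instance)
      (by rintro u v (rfl | rfl) (rfl | rfl) <;> first | rfl | exact hcxy | exact hcxy.symm)
      ⟨x, Or.inl rfl⟩
      (by
        intro k hk
        obtain ⟨w, -, hw⟩ := Finset.mem_image.mp hk
        by_cases hwp : w = x ∨ w = y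
        · refine ⟨z, fun h => h.elim hzx hzy, ?_⟩
          rcases hwp with rfl | rfl
          · rw [hcz, hw]
          · rw [hcz, hcxy, hw]
        · exact ⟨w, hwp, hw⟩)
    refine ⟨_, _, hp1, hu1, hp2, hu2, ?_⟩
    intro hiso
    have h2 : (if (x = x ∨ x = y) then N else c x) = (if (y = x ∨ y = y) then N else c y) := by
      simp
    have h1 := (hiso x y).mpr h2
    simp only [if_pos rfl, if_neg (fun h : y = x => hxy h.symm)] at h1
    exact hN y h1.symm
  · -- class of x is {x, y}; find another class of size ≥ 2
    push_neg at h3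
    have hxyS : ({x, y} : Finset V) ⊆ Finset.univ := Finset.subset_univ _
    have hcard2 : ({x, y} : Finset V).card = 2 := by
      rw [Finset.card_insert_of_notMem (by simpa using hxy), Finset.card_singleton]
    have htcard : (Finset.univ \ {x, y}).card = Fintype.card V - 2 := by
      rw [Finset.card_sdiff_of_subset hxyS, hcard2, Finset.card_univ]
    have hsxpos : 0 < s := by
      rw [← hcs']
      exact Finset.card_pos.mpr ⟨c x, Finset.mem_image_of_mem c (Finset.mem_univ x)⟩
    have hecard : ((Finset.univ.image c).erase (c x)).card = s - 1 := by
      rw [Finset.card_erase_of_mem (Finset.mem_image_of_mem c (Finset.mem_univ x)), hcs']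
    have hlt2 : ((Finset.univ.image c).erase (c x)).card < (Finset.univ \ {x, y}).card := by
      rw [hecard, htcard]; omega
    have hmaps2 : ∀ w ∈ Finset.univ \ {x, y}, c w ∈ (Finset.univ.image c).erase (c x) := by
      intro w hw
      simp only [Finset.mem_sdiff, Finset.mem_insert, Finset.mem_singleton] at hw
      push_neg at hw
      exact Finset.mem_erase.mpr ⟨h3 w hw.2.1 hw.2.2, Finset.mem_image_of_mem c (Finset.mem_univ w)⟩
    obtain ⟨u, hu, v, hv, huv, hcuv⟩ := Finset.exists_ne_map_eq_of_card_lt_of_maps_to hlt2 hmaps2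
    simp only [Finset.mem_sdiff, Finset.mem_insert, Finset.mem_singleton] at hu hv
    push_neg at hu hv
    have hcux : c u ≠ c x := h3 u hu.2.1 hu.2.2
    obtain ⟨hp1, hu1⟩ := key (fun w => w = x) (by infer_instance)
      (by rintro a b rfl rfl; rfl) ⟨x, rfl⟩
      (by
        intro k hk
        obtain ⟨w, -, hw⟩ := Finset.mem_image.mp hk
        by_cases hwx : w = x
        · exact ⟨y, fun h => hxy h.symm, by rw [← hcxy, ← hw, hwx]⟩
        · exact ⟨w, hwx, hw⟩)
    obtain ⟨hp2, hu2⟩ := key (fun w => w = u) (by infer_instance)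
      (by rintro a b rfl rfl; rfl) ⟨u, rfl⟩
      (by
        intro k hk
        obtain ⟨w, -, hw⟩ := Finset.mem_image.mp hk
        by_cases hwu : w = u
        · exact ⟨v, fun h => huv h.symm, by rw [← hcuv, ← hw, hwu]⟩
        · exact ⟨w, hwu, hw⟩)
    refine ⟨_, _, hp1, hu1, hp2, hu2, ?_⟩
    intro hiso
    have hxu : x ≠ u := fun h => hcux (by rw [h])
    have hyu : y ≠ u := fun h => hcux (by rw [← h, ← hcxy])
    have h2 : (if x = u then N else c x) = (if y = u then N else c y) := by
      rw [if_neg hxu, if_neg hyu, hcxy]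
    have h1 := (hiso x y).mpr h2
    simp only [if_pos rfl, if_neg (fun h : y = x => hxy h.symm)] at h1
    exact hN y h1.symm
end

section
/- Fix integers ℓ ≥ 3, m ≥ 2, and 1 < a < ℓ ≤ b. Let V = [a] × [b] × [m]. Define D to be the set of all m-element subsets of V that are neither contained in a single row {x} × [b] × [m] nor in a single column [a] × {y} × [m]. Then the hypergraph (V, D) has chromatic number a; that is, every coloring of V avoiding monochromatic D-edges uses at least a colors, and some such coloring uses exactly a colors. -/
/-- The `D`-edges of `H(ℓ,m,a,b)`: all `m`-subsets of `[a] × [b] × [m]` contained in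
no single row and no single column. -/
def gridD (a b m : ℕ) : Set (Finset (Fin a × Fin b × Fin m)) :=
  {e | e.card = m ∧ (¬ ∃ x, ∀ p ∈ e, p.1 = x) ∧ (¬ ∃ y, ∀ p ∈ e, p.2.1 = y)}

/-- The `C`-edges of `H(ℓ,m,a,b)`: all `ℓ`-subsets of `[a] × [b] × [m]` containing
at least two vertices from the same column. -/
def gridC (a b m ℓ : ℕ) : Set (Finset (Fin a × Fin b × Fin m)) :=
  {e | e.card = ℓ ∧ ∃ p ∈ e, ∃ q ∈ e, p ≠ q ∧ p.2.1 = q.2.1}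

/-- A row-coloring: rows are monochromatic with pairwise distinct colors. -/
def IsRowColoring {a b m : ℕ} (c : Fin a × Fin b × Fin m → ℕ) : Prop :=
  ∀ p q : Fin a × Fin b × Fin m, c p = c q ↔ p.1 = q.1

/-- A column-coloring: columns are monochromatic with pairwise distinct colors. -/
def IsColColoring {a b m : ℕ} (c : Fin a × Fin b × Fin m → ℕ) : Prop :=
  ∀ p q : Fin a × Fin b × Fin m, c p = c q ↔ p.2.1 = q.2.1

/-!
A color class avoiding `D`-edges either lies in one row (at most `b * m` vertices), lies in one
column (at most `a * m ≤ b * m` vertices), or has fewer than `m` vertices: otherwise it contains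
two vertices differing in both row and column, and any `m` of its vertices including these two
form a monochromatic `D`-edge. Hence at least `a * b * m / (b * m) = a` colors are needed, and
coloring each row by its index attains this.
-/

open Finset

section RowsAndColumns

variable {α β γ : Type*}

theorem card_le_of_forall_fst_eq [Fintype β] [Fintype γ] {S : Finset (α × β × γ)} {x : α}
    (hS : ∀ p ∈ S, p.1 = x) : #S ≤ Fintype.card β * Fintype.card γ := by
  rw [← Fintype.card_prod, ← card_univ]
  refine card_le_card_of_injOn Prod.snd (fun _ _ => mem_coe.2 (mem_univ _)) ?_
  intro p hp q hq h
  exact Prod.ext ((hS p hp).trans (hS q hq).symm) h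

theorem card_le_of_forall_snd_fst_eq [Fintype α] [Fintype γ] {S : Finset (α × β × γ)} {y : β}
    (hS : ∀ p ∈ S, p.2.1 = y) : #S ≤ Fintype.card α * Fintype.card γ := by
  rw [← Fintype.card_prod, ← card_univ]
  refine card_le_card_of_injOn (fun p => (p.1, p.2.2)) (fun _ _ => mem_coe.2 (mem_univ _)) ?_
  intro p hp q hq h
  simp only [Prod.mk.injEq] at h
  exact Prod.ext h.1 (Prod.ext ((hS p hp).trans (hS q hq).symm) h.2)

theorem exists_fst_ne_and_snd_fst_ne {S : Finset (α × β × γ)} {p₀ : α × β × γ} (hp₀ : p₀ ∈ S)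
    (hrow : ¬ ∃ x, ∀ p ∈ S, p.1 = x) (hcol : ¬ ∃ y, ∀ p ∈ S, p.2.1 = y) :
    ∃ u ∈ S, ∃ v ∈ S, u.1 ≠ v.1 ∧ u.2.1 ≠ v.2.1 := by
  push Not at hrow hcol
  obtain ⟨p, hpS, hp⟩ := hrow p₀.1
  obtain ⟨r, hrS, hr⟩ := hcol p₀.2.1
  by_cases hpcol : p.2.1 = p₀.2.1
  · by_cases hrp : r.1 = p.1
    · exact ⟨r, hrS, p₀, hp₀, hrp ▸ hp, hr⟩
    · exact ⟨r, hrS, p, hpS, hrp, hpcol ▸ hr⟩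
  · exact ⟨p, hpS, p₀, hp₀, hp, hpcol⟩

end RowsAndColumns

section Grid

variable {a b m : ℕ}

theorem exists_mem_gridD_subset (hm : 2 ≤ m) {S : Finset (Fin a × Fin b × Fin m)}
    (hmS : m ≤ #S) (hrow : ¬ ∃ x, ∀ p ∈ S, p.1 = x) (hcol : ¬ ∃ y, ∀ p ∈ S, p.2.1 = y) :
    ∃ t ∈ gridD a b m, t ⊆ S := by
  obtain ⟨p₀, hp₀⟩ := card_pos.mp (by omega : 0 < #S)
  obtain ⟨u, hu, v, hv, hrow_ne, hcol_ne⟩ := exists_fst_ne_and_snd_fst_ne hp₀ hrow hcol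
  have huv : u ≠ v := fun h => hrow_ne (congrArg Prod.fst h)
  have hpair : #{u, v} ≤ m := by rw [card_pair huv]; exact hm
  obtain ⟨t, hut, htS, ht⟩ := exists_subsuperset_card_eq (insert_subset hu (by simpa)) hpair hmS
  have hu' : u ∈ t := hut (mem_insert_self u {v})
  have hv' : v ∈ t := hut (mem_insert_of_mem (mem_singleton_self v))
  refine ⟨t, ⟨ht, ?_, ?_⟩, htS⟩
  · rintro ⟨x, hx⟩
    exact hrow_ne ((hx u hu').trans (hx v hv').symm)
  · rintro ⟨y, hy⟩
    exact hcol_ne ((hy u hu').trans (hy v hv').symm)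

theorem card_le_of_forall_gridD_not_subset (hm : 2 ≤ m) (hab : a ≤ b)
    {S : Finset (Fin a × Fin b × Fin m)} (hS : ∀ t ∈ gridD a b m, ¬ t ⊆ S) : #S ≤ b * m := by
  by_cases hrow : ∃ x, ∀ p ∈ S, p.1 = x
  · obtain ⟨x, hx⟩ := hrow
    simpa using card_le_of_forall_fst_eq hx
  by_cases hcol : ∃ y, ∀ p ∈ S, p.2.1 = y
  · obtain ⟨y, hy⟩ := hcol
    calc #S ≤ a * m := by simpa using card_le_of_forall_snd_fst_eq hy
      _ ≤ b * m := Nat.mul_le_mul_right m hab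
  by_contra! hlarge
  obtain ⟨p, hp⟩ := card_pos.mp (by omega : 0 < #S)
  have hmS : m ≤ #S := (Nat.le_mul_of_pos_left m p.2.1.pos).trans hlarge.le
  obtain ⟨t, ht, htS⟩ := exists_mem_gridD_subset hm hmS hrow hcol
  exact hS t ht htS

theorem le_card_image_of_forall_gridD (hm : 2 ≤ m) (hab : a ≤ b)
    (c : Fin a × Fin b × Fin m → ℕ) (hc : ∀ e ∈ gridD a b m, ∃ u ∈ e, ∃ v ∈ e, c u ≠ c v) :
    a ≤ #(univ.image c) := by
  obtain rfl | hb := b.eq_zero_or_pos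
  · omega
  have hclass : ∀ k ∈ univ.image c, #{p ∈ univ | c p = k} ≤ b * m := fun k _ =>
    card_le_of_forall_gridD_not_subset hm hab fun t ht htk => by
      obtain ⟨u, hu, v, hv, hne⟩ := hc t ht
      exact hne (((mem_filter.mp (htk hu)).2).trans (mem_filter.mp (htk hv)).2.symm)
  have hcount := card_le_mul_card_image univ (b * m) hclass
  rw [card_univ, Fintype.card_prod, Fintype.card_prod, Fintype.card_fin, Fintype.card_fin,
    Fintype.card_fin, mul_comm] at hcount
  exact Nat.le_of_mul_le_mul_left hcount (by positivity)

theorem exists_fst_val_ne_of_mem_gridD (hm : 0 < m) {e : Finset (Fin a × Fin b × Fin m)}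
    (he : e ∈ gridD a b m) : ∃ u ∈ e, ∃ v ∈ e, (u.1 : ℕ) ≠ v.1 := by
  obtain ⟨hcard, hrow, -⟩ := he
  obtain ⟨p₀, hp₀⟩ := card_pos.mp (hcard ▸ hm)
  push Not at hrow
  obtain ⟨q, hq, hqne⟩ := hrow p₀.1
  exact ⟨q, hq, p₀, hp₀, Fin.val_ne_of_ne hqne⟩

theorem usesExactly_fst_val (hb : 0 < b) (hm : 0 < m) :
    UsesExactly (fun p : Fin a × Fin b × Fin m => (p.1 : ℕ)) a := by
  have himage : univ.image (fun p : Fin a × Fin b × Fin m => (p.1 : ℕ)) = range a := by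
    ext k
    simp only [mem_image, mem_univ, true_and, mem_range]
    exact ⟨fun ⟨p, hp⟩ => hp ▸ p.1.isLt, fun hk => ⟨(⟨k, hk⟩, ⟨0, hb⟩, ⟨0, hm⟩), rfl⟩⟩
  rw [UsesExactly, himage, card_range]

end Grid

theorem stmt7_general (ℓ m a b : ℕ) (hm : 2 ≤ m)
    (hal : a < ℓ) (hlb : ℓ ≤ b) :
    (∀ c : Fin a × Fin b × Fin m → ℕ,
        (∀ e ∈ gridD a b m, ∃ u ∈ e, ∃ v ∈ e, c u ≠ c v) →
        a ≤ (Finset.univ.image c).card) ∧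
    (∃ c : Fin a × Fin b × Fin m → ℕ,
        (∀ e ∈ gridD a b m, ∃ u ∈ e, ∃ v ∈ e, c u ≠ c v) ∧
        UsesExactly c a) :=
  ⟨le_card_image_of_forall_gridD hm (by omega),
    fun p => (p.1 : ℕ), fun _ => exists_fst_val_ne_of_mem_gridD (by omega),
    usesExactly_fst_val (by omega) (by omega)⟩

theorem stmt7 (ℓ m a b : ℕ) (hl : 3 ≤ ℓ) (hm : 2 ≤ m)
    (ha : 1 < a) (hal : a < ℓ) (hlb : ℓ ≤ b) :
    (∀ c : Fin a × Fin b × Fin m → ℕ,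
        (∀ e ∈ gridD a b m, ∃ u ∈ e, ∃ v ∈ e, c u ≠ c v) →
        a ≤ (Finset.univ.image c).card) ∧
    (∃ c : Fin a × Fin b × Fin m → ℕ,
        (∀ e ∈ gridD a b m, ∃ u ∈ e, ∃ v ∈ e, c u ≠ c v) ∧
        UsesExactly c a) :=
  stmt7_general ℓ m a b hm hal hlb
end

section
/- With V = [a] × [b] × [m], 1 < a < ℓ ≤ b, m ≥ 2, and D the set of m-subsets of V contained in no single row and no single column: every coloring of V using exactly a colors and avoiding monochromatic D-edges is a row-coloring, i.e., each row is monochromatic and distinct rows get distinct colors. -/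
theorem stmt8 (ℓ m a b : ℕ) (hm : 2 ≤ m) (ha : 1 < a) (hal : a < ℓ) (hlb : ℓ ≤ b)
    (c : Fin a × Fin b × Fin m → ℕ)
    (hc : ∀ e ∈ gridD a b m, ∃ u ∈ e, ∃ v ∈ e, c u ≠ c v)
    (hca : UsesExactly c a) :
    IsRowColoring c := by
  classical
  have ha0 : 0 < a := by omega
  have hm0 : 0 < m := by omega
  have hab : a < b := lt_of_lt_of_le hal hlb
  have hb : 0 < b := lt_trans ha0 hab
  have hca' : (Finset.univ.image c).card = a := hca
  set S : ℕ → Finset (Fin a × Fin b × Fin m) :=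
    fun t => Finset.univ.filter (fun p => c p = t) with hSdef
  -- Lemma A: a large class is contained in a row or a column
  have lemA : ∀ t, m ≤ (S t).card →
      (∃ x, ∀ p ∈ S t, p.1 = x) ∨ (∃ y, ∀ p ∈ S t, p.2.1 = y) := by
    intro t hcard
    by_contra h
    push_neg at h
    obtain ⟨h1, h2⟩ := h
    have huv : ∃ u ∈ S t, ∃ v ∈ S t, u.1 ≠ v.1 ∧ u.2.1 ≠ v.2.1 := by
      have hne : (S t).Nonempty := Finset.card_pos.mp (by omega)
      obtain ⟨p, hp⟩ := hne
      obtain ⟨q, hq, hq1⟩ := h1 p.1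
      obtain ⟨w, hw, hw1⟩ := h2 q.2.1
      by_cases hpq : p.2.1 = q.2.1
      · by_cases hwq : w.1 = q.1
        · exact ⟨w, hw, p, hp, by rw [hwq]; exact hq1, by rw [hpq]; exact hw1⟩
        · exact ⟨w, hw, q, hq, hwq, hw1⟩
      · exact ⟨p, hp, q, hq, hq1.symm, hpq⟩
    obtain ⟨u, hu, v, hv, huv1, huv2⟩ := huv
    have hne : u ≠ v := fun h => huv1 (by rw [h])
    have hsub : ({u, v} : Finset _) ⊆ S t := by
      intro p hp
      rcases Finset.mem_insert.mp hp with rfl | hp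
      · exact hu
      · rw [Finset.mem_singleton.mp hp]; exact hv
    have hc2 : ({u, v} : Finset _).card ≤ m := by
      rw [Finset.card_pair hne]; exact hm
    obtain ⟨e, hue, heS, hecard⟩ := Finset.exists_subsuperset_card_eq hsub hc2 hcard
    have hue' : u ∈ e := hue (Finset.mem_insert_self _ _)
    have hve' : v ∈ e := hue (by simp)
    have heD : e ∈ gridD a b m := by
      refine ⟨hecard, ?_, ?_⟩
      · rintro ⟨x, hx⟩
        exact huv1 ((hx u hue').trans (hx v hve').symm)
      · rintro ⟨y, hy⟩
        exact huv2 ((hy u hue').trans (hy v hve').symm)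
    obtain ⟨u', hu', v', hv', hne'⟩ := hc e heD
    have hcu : c u' = t := (Finset.mem_filter.mp (heS hu')).2
    have hcv : c v' = t := (Finset.mem_filter.mp (heS hv')).2
    exact hne' (hcu.trans hcv.symm)
  -- card bounds
  have rowBound : ∀ t, (∃ x, ∀ p ∈ S t, p.1 = x) → (S t).card ≤ b * m := by
    rintro t ⟨x, hx⟩
    have : (S t).card ≤ (Finset.univ : Finset (Fin b × Fin m)).card := by
      apply Finset.card_le_card_of_injOn (fun p => p.2) (fun _ _ => Finset.mem_univ _)
      intro p hp q hq hpq
      exact Prod.ext ((hx p hp).trans (hx q hq).symm) hpq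
    simpa using this
  have colBound : ∀ t, (∃ y, ∀ p ∈ S t, p.2.1 = y) → (S t).card ≤ a * m := by
    rintro t ⟨y, hy⟩
    have : (S t).card ≤ (Finset.univ : Finset (Fin a × Fin m)).card := by
      apply Finset.card_le_card_of_injOn (fun p => (p.1, p.2.2))
        (fun _ _ => Finset.mem_univ _)
      intro p hp q hq hpq
      simp only [Prod.mk.injEq] at hpq
      have h3 : p.2.1 = q.2.1 := (hy p hp).trans (hy q hq).symm
      exact Prod.ext hpq.1 (Prod.ext h3 hpq.2)
    simpa using this
  have anyBound : ∀ t, (S t).card ≤ b * m := by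
    intro t
    by_cases hcard : m ≤ (S t).card
    · rcases lemA t hcard with h | h
      · exact rowBound t h
      · exact le_trans (colBound t h) (Nat.mul_le_mul_right m hab.le)
    · push_neg at hcard
      calc (S t).card ≤ m := hcard.le
        _ ≤ b * m := Nat.le_mul_of_pos_left m hb
  set img := (Finset.univ.image c) with himg
  have hsum : ∑ t ∈ img, (S t).card = a * (b * m) := by
    have h := Finset.card_eq_sum_card_fiberwise
      (f := c) (s := Finset.univ) (t := img)
      (fun p _ => Finset.mem_image_of_mem c (Finset.mem_univ p))
    simp only [hSdef]
    rw [← h]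
    simp [mul_assoc]
  -- every color class is in a row
  have hrow : ∀ t ∈ img, ∃ x, ∀ p ∈ S t, p.1 = x := by
    by_contra h
    push_neg at h
    obtain ⟨t0, ht0, ht0row⟩ := h
    have ht0small : (S t0).card ≤ a * m := by
      by_cases hcard : m ≤ (S t0).card
      · rcases lemA t0 hcard with h | h
        · obtain ⟨x, hx⟩ := h
          obtain ⟨p, hp, hne⟩ := ht0row x
          exact absurd (hx p hp) hne
        · exact colBound t0 h
      · push_neg at hcard
        calc (S t0).card ≤ m := hcard.le
          _ ≤ a * m := Nat.le_mul_of_pos_left m ha0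
    have hsum2 : (S t0).card + ∑ t ∈ img.erase t0, (S t).card = a * (b * m) :=
      (Finset.add_sum_erase img (fun t => (S t).card) ht0).trans hsum
    have herase : ∑ t ∈ img.erase t0, (S t).card ≤ (a - 1) * (b * m) := by
      have hcard : (img.erase t0).card = a - 1 := by
        rw [Finset.card_erase_of_mem ht0, hca']
      calc ∑ t ∈ img.erase t0, (S t).card
          ≤ (img.erase t0).card * (b * m) := by
            rw [← smul_eq_mul]
            exact Finset.sum_le_card_nsmul _ _ _ (fun t _ => anyBound t)
        _ = (a - 1) * (b * m) := by rw [hcard]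
    have hsplit : (a - 1) * (b * m) + b * m = a * (b * m) := by
      have h : a - 1 + 1 = a := by omega
      calc (a - 1) * (b * m) + b * m = (a - 1 + 1) * (b * m) := by rw [add_mul, one_mul]
        _ = a * (b * m) := by rw [h]
    have hle : b * m ≤ a * m := by
      have h1 : (S t0).card + ∑ t ∈ img.erase t0, (S t).card
          ≤ a * m + (a - 1) * (b * m) := Nat.add_le_add ht0small herase
      rw [hsum2, ← hsplit] at h1
      linarith
    have hba : b ≤ a := Nat.le_of_mul_le_mul_right hle hm0
    omega
  -- the row function
  have hrow' : ∀ t ∈ img, ∃ x : Fin a, ∀ p, c p = t → p.1 = x := by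
    intro t ht
    obtain ⟨x, hx⟩ := hrow t ht
    exact ⟨x, fun p hp => hx p (Finset.mem_filter.mpr ⟨Finset.mem_univ _, hp⟩)⟩
  set f : ℕ → Fin a := fun t =>
    if h : ∃ x : Fin a, ∀ p, c p = t → p.1 = x then h.choose else ⟨0, ha0⟩ with hfdef
  have hf : ∀ p, f (c p) = p.1 := by
    intro p
    have hmem : c p ∈ img := Finset.mem_image_of_mem c (Finset.mem_univ p)
    obtain ⟨x, hx⟩ := hrow' (c p) hmem
    have hex : ∃ x : Fin a, ∀ q, c q = c p → q.1 = x := ⟨x, hx⟩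
    simp only [hfdef, dif_pos hex]
    exact (hex.choose_spec p rfl).symm
  have himgf : img.image f = Finset.univ := by
    apply Finset.eq_univ_of_forall
    intro x
    refine Finset.mem_image.mpr ⟨c (x, ⟨0, hb⟩, ⟨0, hm0⟩), ?_, ?_⟩
    · exact Finset.mem_image_of_mem c (Finset.mem_univ _)
    · exact hf (x, ⟨0, hb⟩, ⟨0, hm0⟩)
  have hinj : Set.InjOn f img := by
    apply Finset.injOn_of_card_image_eq
    rw [himgf, Finset.card_univ, Fintype.card_fin]
    exact hca'.symm
  intro p q
  constructor
  · intro h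
    rw [← hf p, ← hf q, h]
  · intro h
    have hp : c p ∈ img := Finset.mem_image_of_mem c (Finset.mem_univ p)
    have hq : c q ∈ img := Finset.mem_image_of_mem c (Finset.mem_univ q)
    apply hinj hp hq
    rw [hf p, hf q, h]
end

section
/- Fix 1 < a < ℓ ≤ b and m ≥ 2, and let H = H(ℓ, m, a, b) be the (ℓ, m)-uniform mixed hypergraph on V = [a] × [b] × [m] where C is all ℓ-subsets containing at least 2 vertices from the same column, and D is all m-subsets contained in neither a single row nor a single column. Then every row-coloring and every column-coloring of H is a proper coloring of H. -/
theorem stmt9 (ℓ m a b : ℕ) (hm : 2 ≤ m) (ha : 1 < a) (hal : a < ℓ) (hlb : ℓ ≤ b)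
    (c : Fin a × Fin b × Fin m → ℕ) (hc : IsRowColoring c ∨ IsColColoring c) :
    Proper (gridC a b m ℓ) (gridD a b m) c := by
  constructor
  · rintro e ⟨hcard, p, hp, q, hq, hpq, hcol⟩
    rcases hc with hrow | hcol'
    · -- pigeonhole on rows
      have hlt : (Finset.univ : Finset (Fin a)).card * 1 < e.card := by
        simpa [hcard] using hal
      obtain ⟨x, -, hx⟩ := Finset.exists_lt_card_fiber_of_mul_lt_card_of_maps_to
        (f := fun p : Fin a × Fin b × Fin m => p.1)
        (fun p _ => Finset.mem_univ _) hlt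
      obtain ⟨u, hu, v, hv, huv⟩ := Finset.one_lt_card.mp hx
      simp only [Finset.mem_filter] at hu hv
      exact ⟨u, hu.1, v, hv.1, huv, (hrow u v).mpr (hu.2.trans hv.2.symm)⟩
    · exact ⟨p, hp, q, hq, hpq, (hcol' p q).mpr hcol⟩
  · rintro e ⟨hcard, hnr, hnc⟩
    have hne : e.Nonempty := Finset.card_pos.mp (by omega)
    obtain ⟨p, hp⟩ := hne
    rcases hc with hrow | hcol'
    · push_neg at hnr
      obtain ⟨q, hq, hq'⟩ := hnr p.1
      exact ⟨q, hq, p, hp, fun h => hq' ((hrow q p).mp h)⟩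
    · push_neg at hnc
      obtain ⟨q, hq, hq'⟩ := hnc p.2.1
      exact ⟨q, hq, p, hp, fun h => hq' ((hcol' q p).mp h)⟩
end

section
/- Let H = H(ℓ, m, a, b) with 1 < a < ℓ ≤ b, m ≥ 2. If c is a proper coloring of H using at least ℓ colors, then every column of H is monochromatic under c, and consequently c is a column-coloring using exactly b colors. -/
theorem stmt11 (ℓ m a b : ℕ) (hm : 2 ≤ m) (ha : 1 < a) (hal : a < ℓ) (hlb : ℓ ≤ b)
    (c : Fin a × Fin b × Fin m → ℕ)
    (hc : Proper (gridC a b m ℓ) (gridD a b m) c)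
    (hcolors : ℓ ≤ (Finset.univ.image c).card) :
    (∀ p q : Fin a × Fin b × Fin m, p.2.1 = q.2.1 → c p = c q) ∧
    IsColColoring c ∧ UsesExactly c b := by
  classical
  have hℓ2 : 2 ≤ ℓ := by omega
  -- Step 1: every column is monochromatic
  have mono : ∀ p q : Fin a × Fin b × Fin m, p.2.1 = q.2.1 → c p = c q := by
    intro p q hcol
    by_contra hne
    have hpq : p ≠ q := fun h => hne (by rw [h])
    -- pick a set T of ℓ colors containing c p and c q
    have hsub : ({c p, c q} : Finset ℕ) ⊆ Finset.univ.image c := by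
      intro x hx
      simp only [Finset.mem_insert, Finset.mem_singleton] at hx
      rcases hx with h | h <;> subst h <;> exact Finset.mem_image_of_mem c (Finset.mem_univ _)
    have hcard2 : ({c p, c q} : Finset ℕ).card ≤ ℓ := by
      calc ({c p, c q} : Finset ℕ).card ≤ 2 := Finset.card_insert_le _ _ |>.trans (by simp)
        _ ≤ ℓ := hℓ2
    obtain ⟨T, hT1, hT2, hTcard⟩ := Finset.exists_subsuperset_card_eq hsub hcard2 hcolors
    -- choose preimages
    have hchoice : ∀ k ∈ T, ∃ v : Fin a × Fin b × Fin m, c v = k := by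
      intro k hk
      have := hT2 hk
      simp only [Finset.mem_image] at this
      obtain ⟨v, _, hv⟩ := this
      exact ⟨v, hv⟩
    set f : ℕ → Fin a × Fin b × Fin m := fun k =>
      if k = c p then p else if k = c q then q else
        if h : ∃ v, c v = k then h.choose else p with hf
    have hfc : ∀ k ∈ T, c (f k) = k := by
      intro k hk
      simp only [hf]
      split_ifs with h1 h2 h3
      · omega
      · omega
      · exact h3.choose_spec
      · exact absurd (hchoice k hk) h3
    have hinj : Set.InjOn f T := by
      intro x hx y hy hxy
      have := hfc x hx
      rw [hxy, hfc y hy] at this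
      omega
    set S : Finset (Fin a × Fin b × Fin m) := T.image f with hS
    have hScard : S.card = ℓ := by rw [hS, Finset.card_image_of_injOn hinj, hTcard]
    have hpS : p ∈ S := by
      refine Finset.mem_image.mpr ⟨c p, hT1 (by simp), ?_⟩
      simp [hf]
    have hqS : q ∈ S := by
      refine Finset.mem_image.mpr ⟨c q, hT1 (by simp), ?_⟩
      simp only [hf]
      rw [if_neg (fun h => hne h.symm)]
      simp
    have hSC : S ∈ gridC a b m ℓ := ⟨hScard, p, hpS, q, hqS, hpq, hcol⟩
    obtain ⟨u, hu, v, hv, huv, hcuv⟩ := hc.1 S hSC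
    obtain ⟨ku, hku, hkuu⟩ := Finset.mem_image.mp hu
    obtain ⟨kv, hkv, hkvv⟩ := Finset.mem_image.mp hv
    have : ku = kv := by
      rw [← hfc ku hku, ← hfc kv hkv, hkuu, hkvv, hcuv]
    exact huv (by rw [← hkuu, ← hkvv, this])
  -- auxiliary fixed coordinates
  have ha0 : 0 < a := by omega
  have hm0 : 0 < m := by omega
  set x0 : Fin a := ⟨0, ha0⟩
  set x1 : Fin a := ⟨1, ha⟩
  set z0 : Fin m := ⟨0, hm0⟩
  set z1 : Fin m := ⟨1, hm⟩
  set g : Fin b → ℕ := fun y => c (x0, y, z0) with hg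
  have hcg : ∀ p : Fin a × Fin b × Fin m, c p = g p.2.1 := fun p => mono p (x0, p.2.1, z0) rfl
  -- Step 2: distinct columns get distinct colors
  have ginj : Function.Injective g := by
    intro y y' hyy'
    by_contra hne
    set e : Finset (Fin a × Fin b × Fin m) :=
      insert (x1, y', z0) ((Finset.univ.image fun k : Fin m => (x0, y, k)).erase (x0, y, z0))
      with he
    have hmemim : ∀ k : Fin m, (x0, y, k) ∈ Finset.univ.image fun k : Fin m => (x0, y, k) :=
      fun k => Finset.mem_image_of_mem _ (Finset.mem_univ k)
    have hnotmem : (x1, y', z0) ∉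
        (Finset.univ.image fun k : Fin m => (x0, y, k)).erase (x0, y, z0) := by
      intro h
      have := Finset.mem_of_mem_erase h
      simp only [Finset.mem_image] at this
      obtain ⟨k, _, hk⟩ := this
      have h' : (0 : ℕ) = 1 := congrArg (fun p : Fin a × Fin b × Fin m => p.1.1) hk
      omega
    have hecard : e.card = m := by
      rw [he, Finset.card_insert_of_notMem hnotmem, Finset.card_erase_of_mem (hmemim z0),
        Finset.card_image_of_injective _ (fun k k' h => by
          simpa using congrArg (fun p => p.2.2) h), Finset.card_univ, Fintype.card_fin]
      omega
    have hz1e : ((x0, y, z1) : Fin a × Fin b × Fin m) ∈ e := by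
      refine Finset.mem_insert_of_mem (Finset.mem_erase.mpr ⟨?_, hmemim z1⟩)
      intro h
      have h' : (1 : ℕ) = 0 := congrArg (fun p : Fin a × Fin b × Fin m => p.2.2.1) h
      omega
    have heD : e ∈ gridD a b m := by
      refine ⟨hecard, ?_, ?_⟩
      · rintro ⟨x, hx⟩
        have h1 := hx _ (Finset.mem_insert_self _ _)
        have h2 := hx _ hz1e
        have h3 : (0 : ℕ) = 1 := congrArg Fin.val ((h2 : x0 = x).trans (h1 : x1 = x).symm)
        omega
      · rintro ⟨yy, hyy⟩
        have h1 := hyy _ (Finset.mem_insert_self _ _)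
        have h2 := hyy _ hz1e
        exact hne ((h2 : y = yy).trans (h1 : y' = yy).symm)
    obtain ⟨u, hu, v, hv, hcuv⟩ := hc.2 e heD
    have hcol : ∀ w ∈ e, c w = g y := by
      intro w hw
      rw [he, Finset.mem_insert] at hw
      rcases hw with h | h
      · rw [h, hcg]; exact hyy'.symm
      · have := Finset.mem_of_mem_erase h
        simp only [Finset.mem_image] at this
        obtain ⟨k, _, hk⟩ := this
        rw [← hk, hcg]
    exact hcuv (by rw [hcol u hu, hcol v hv])
  refine ⟨mono, ?_, ?_⟩
  · intro p q
    constructor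
    · intro h
      apply ginj
      rw [← hcg, ← hcg, h]
    · exact mono p q
  · have himg : Finset.univ.image c = Finset.univ.image g := by
      ext x
      simp only [Finset.mem_image, Finset.mem_univ, true_and]
      constructor
      · rintro ⟨p, hp⟩; exact ⟨p.2.1, by rw [← hcg, hp]⟩
      · rintro ⟨y, hy⟩; exact ⟨(x0, y, z0), hy⟩
    rw [UsesExactly, himg, Finset.card_image_of_injective _ ginj, Finset.card_univ,
      Fintype.card_fin]
end

section
/- Let H = H(ℓ, m, a, b) with 1 < a < ℓ ≤ b, m ≥ 2, defined on V = [a] × [b] × [m] as above. Then the feasible set of H is exactly [a, ℓ - 1] ∪ {b}: H has a proper coloring with exactly s colors if and only if a ≤ s ≤ ℓ - 1 or s = b. -/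
lemma exists_offdiag {a b m : ℕ} (ha : 0 < a) (S : Finset (Fin a × Fin b × Fin m))
    (hrow : ¬ ∃ x, ∀ p ∈ S, p.1 = x) (hcol : ¬ ∃ y, ∀ p ∈ S, p.2.1 = y) :
    ∃ u ∈ S, ∃ v ∈ S, u.1 ≠ v.1 ∧ u.2.1 ≠ v.2.1 := by
  push_neg at hrow hcol
  obtain ⟨p, hp, -⟩ := hrow ⟨0, ha⟩
  obtain ⟨q, hq, hq1⟩ := hrow p.1
  obtain ⟨r, hr, hr1⟩ := hcol p.2.1
  by_cases h1 : q.2.1 = p.2.1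
  · by_cases h2 : r.1 = q.1
    · exact ⟨r, hr, p, hp, by rw [h2]; exact hq1, hr1⟩
    · exact ⟨r, hr, q, hq, h2, by rw [h1]; exact hr1⟩
  · exact ⟨q, hq, p, hp, hq1, h1⟩

lemma class_card_le {a b m : ℕ} (hm : 2 ≤ m) (ha : 1 < a) (hab : a ≤ b)
    (c : Fin a × Fin b × Fin m → ℕ)
    (hD : ∀ e ∈ gridD a b m, ∃ u ∈ e, ∃ v ∈ e, c u ≠ c v) (n : ℕ) :
    (Finset.univ.filter (fun p => c p = n)).card ≤ b * m := by
  set S := Finset.univ.filter (fun p => c p = n) with hSdef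
  by_cases hrow : ∃ x, ∀ p ∈ S, p.1 = x
  · obtain ⟨x, hx⟩ := hrow
    have h1 : S.card ≤ (Finset.univ : Finset (Fin b × Fin m)).card := by
      apply Finset.card_le_card_of_injOn (fun p => p.2) (fun p _ => Finset.mem_univ _)
      intro p hp q hq h
      exact Prod.ext (by rw [hx p hp, hx q hq]) h
    simpa using h1
  · by_cases hcol : ∃ y, ∀ p ∈ S, p.2.1 = y
    · obtain ⟨y, hy⟩ := hcol
      have h1 : S.card ≤ (Finset.univ : Finset (Fin a × Fin m)).card := by
        apply Finset.card_le_card_of_injOn (fun p => (p.1, p.2.2)) (fun p _ => Finset.mem_univ _)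
        intro p hp q hq h
        simp only [Prod.mk.injEq] at h
        exact Prod.ext h.1 (Prod.ext (by rw [hy p hp, hy q hq]) h.2)
      have h2 : a * m ≤ b * m := Nat.mul_le_mul_right m hab
      have h3 : (Finset.univ : Finset (Fin a × Fin m)).card = a * m := by simp
      omega
    · by_contra hbig
      push_neg at hbig
      have hb1 : 1 ≤ b := by omega
      have hmS : m ≤ S.card := by nlinarith
      obtain ⟨u, hu, v, hv, h1, h2⟩ := exists_offdiag (by omega) S hrow hcol
      have huv : ({u, v} : Finset _) ⊆ S := by
        intro p hp
        simp only [Finset.mem_insert, Finset.mem_singleton] at hp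
        rcases hp with h | h <;> simp [h, hu, hv]
      obtain ⟨e, he1, he2, he3⟩ := Finset.exists_subsuperset_card_eq huv
        (le_trans (Finset.card_insert_le _ _) (by simp; omega)) hmS
      have heD : e ∈ gridD a b m := by
        refine ⟨he3, ?_, ?_⟩
        · rintro ⟨x, hx⟩
          exact h1 (by rw [hx u (he1 (by simp)), hx v (he1 (by simp))])
        · rintro ⟨y, hy⟩
          exact h2 (by rw [hy u (he1 (by simp)), hy v (he1 (by simp))])
      obtain ⟨u', hu', v', hv', hne⟩ := hD e heD
      have hcu : c u' = n := by have := he2 hu'; rw [hSdef] at this; simpa using this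
      have hcv : c v' = n := by have := he2 hv'; rw [hSdef] at this; simpa using this
      exact hne (hcu.trans hcv.symm)

lemma a_le_s {a b m : ℕ} (hm : 2 ≤ m) (ha : 1 < a) (hab : a ≤ b)
    (c : Fin a × Fin b × Fin m → ℕ)
    (hD : ∀ e ∈ gridD a b m, ∃ u ∈ e, ∃ v ∈ e, c u ≠ c v) :
    a ≤ (Finset.univ.image c).card := by
  classical
  have hsum : (Finset.univ : Finset (Fin a × Fin b × Fin m)).card
      = ∑ n ∈ Finset.univ.image c, (Finset.univ.filter fun p => c p = n).card :=
    Finset.card_eq_sum_card_fiberwise (fun p _ => Finset.mem_image_of_mem c (Finset.mem_univ p))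
  have hle : ∑ n ∈ Finset.univ.image c, (Finset.univ.filter fun p => c p = n).card
      ≤ (Finset.univ.image c).card * (b * m) := by
    calc ∑ n ∈ Finset.univ.image c, (Finset.univ.filter fun p => c p = n).card
        ≤ ∑ _n ∈ Finset.univ.image c, (b * m) :=
          Finset.sum_le_sum (fun n _ => class_card_le hm ha hab c hD n)
      _ = (Finset.univ.image c).card * (b * m) := by rw [Finset.sum_const, smul_eq_mul]
  have hcard : (Finset.univ : Finset (Fin a × Fin b × Fin m)).card = a * (b * m) := by
    simp [Finset.card_univ]
  have h4 : a * (b * m) ≤ (Finset.univ.image c).card * (b * m) :=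
    le_trans (le_of_eq (hcard.symm.trans hsum)) hle
  exact Nat.le_of_mul_le_mul_right h4 (Nat.mul_pos (by omega) (by omega))

lemma s_eq_b {a b m ℓ : ℕ} (hm : 2 ≤ m) (ha : 1 < a) (hal : a < ℓ) (hlb : ℓ ≤ b)
    (c : Fin a × Fin b × Fin m → ℕ)
    (hC : ∀ e ∈ gridC a b m ℓ, ∃ u ∈ e, ∃ v ∈ e, u ≠ v ∧ c u = c v)
    (hD : ∀ e ∈ gridD a b m, ∃ u ∈ e, ∃ v ∈ e, c u ≠ c v)
    (hsl : ℓ ≤ (Finset.univ.image c).card) :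
    (Finset.univ.image c).card = b := by
  classical
  have ha0 : (0 : ℕ) < a := by omega
  have hm0 : (0 : ℕ) < m := by omega
  -- columns are monochromatic
  have hmono : ∀ p q : Fin a × Fin b × Fin m, p.2.1 = q.2.1 → c p = c q := by
    intro p q hpq
    by_contra hne
    have hsub : ({c p, c q} : Finset ℕ) ⊆ Finset.univ.image c := by
      intro n hn
      simp only [Finset.mem_insert, Finset.mem_singleton] at hn
      rcases hn with h | h <;> exact h ▸ Finset.mem_image_of_mem c (Finset.mem_univ _)
    obtain ⟨T, hT1, hT2, hT3⟩ := Finset.exists_subsuperset_card_eq hsub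
      (le_trans (Finset.card_insert_le _ _) (by simp; omega)) hsl
    let g : ℕ → Fin a × Fin b × Fin m := fun n =>
      if n = c p then p else if n = c q then q
      else if h : ∃ v, c v = n then h.choose else p
    have hg : ∀ n ∈ T, c (g n) = n := by
      intro n hn
      by_cases h1 : n = c p
      · simp [g, h1]
      · by_cases h2 : n = c q
        · subst h2; simp [g, h1]
        · have hex : ∃ v, c v = n := by
            have := hT2 hn
            simp only [Finset.mem_image, Finset.mem_univ, true_and] at this
            exact this
          simp only [g, h1, h2, if_false, hex, dif_pos]
          exact hex.choose_spec
    have hp' : g (c p) = p := by simp [g]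
    have hq' : g (c q) = q := by simp [g, Ne.symm hne]
    have hinj : Set.InjOn g T := fun n1 h1 n2 h2 h => by
      rw [← hg n1 h1, ← hg n2 h2, h]
    have hcard : (T.image g).card = ℓ := by
      rw [Finset.card_image_of_injOn hinj, hT3]
    have hpm : p ∈ T.image g :=
      Finset.mem_image.2 ⟨c p, hT1 (by simp), hp'⟩
    have hqm : q ∈ T.image g :=
      Finset.mem_image.2 ⟨c q, hT1 (by simp), hq'⟩
    have hCE : T.image g ∈ gridC a b m ℓ :=
      ⟨hcard, p, hpm, q, hqm, fun h => hne (by rw [h]), hpq⟩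
    obtain ⟨u, hu, v, hv, huv, hcuv⟩ := hC _ hCE
    obtain ⟨n1, hn1, rfl⟩ := Finset.mem_image.1 hu
    obtain ⟨n2, hn2, rfl⟩ := Finset.mem_image.1 hv
    rw [hg n1 hn1, hg n2 hn2] at hcuv
    exact huv (by rw [hcuv])
  -- the column color function
  set f : Fin b → ℕ := fun y => c (⟨0, ha0⟩, y, ⟨0, hm0⟩) with hf
  have hcf : ∀ p : Fin a × Fin b × Fin m, c p = f p.2.1 :=
    fun p => hmono p (⟨0, ha0⟩, p.2.1, ⟨0, hm0⟩) rfl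
  have himg : Finset.univ.image c = Finset.univ.image f := by
    apply Finset.ext
    intro n
    simp only [Finset.mem_image, Finset.mem_univ, true_and]
    constructor
    · rintro ⟨p, rfl⟩; exact ⟨p.2.1, (hcf p).symm⟩
    · rintro ⟨y, rfl⟩; exact ⟨(⟨0, ha0⟩, y, ⟨0, hm0⟩), rfl⟩
  have hfinj : Function.Injective f := by
    intro y y' hyy
    by_contra hne
    set z0 : Fin m := ⟨0, hm0⟩ with hz0
    set z1 : Fin m := ⟨1, by omega⟩ with hz1
    have hz10 : z1 ≠ z0 := by
      intro h; exact absurd (congrArg Fin.val h) (by simp [hz0, hz1])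
    -- build a monochromatic D-edge
    let g : Fin m → Fin a × Fin b × Fin m := fun z =>
      if z = z0 then (⟨1, ha⟩, y', z) else (⟨0, ha0⟩, y, z)
    have hval : ∀ z, (g z).2.2 = z := by
      intro z; by_cases hz : z = z0 <;> simp [g, hz]
    have hginj : Function.Injective g := fun z z' h => by
      rw [← hval z, ← hval z', h]
    set e : Finset (Fin a × Fin b × Fin m) := Finset.univ.image g with he
    have h0 : g z0 ∈ e := Finset.mem_image_of_mem g (Finset.mem_univ _)
    have h1 : g z1 ∈ e := Finset.mem_image_of_mem g (Finset.mem_univ _)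
    have hg0 : g z0 = (⟨1, ha⟩, y', z0) := by simp [g]
    have hg1 : g z1 = (⟨0, ha0⟩, y, z1) := by simp [g, hz10]
    have heD : e ∈ gridD a b m := by
      refine ⟨by rw [he, Finset.card_image_of_injective _ hginj]; simp, ?_, ?_⟩
      · rintro ⟨x, hx⟩
        have e0 := hx _ h0
        have e1 := hx _ h1
        rw [hg0] at e0
        rw [hg1] at e1
        rw [← e1] at e0
        exact absurd (congrArg Fin.val e0) (by simp)
      · rintro ⟨yy, hyy2⟩
        have e0 := hyy2 _ h0
        have e1 := hyy2 _ h1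
        rw [hg0] at e0
        rw [hg1] at e1
        rw [← e1] at e0
        have : y' = y := e0
        exact hne this.symm
    obtain ⟨u, hu, v, hv, hne2⟩ := hD e heD
    have key : ∀ w ∈ e, c w = f y := by
      intro w hw
      obtain ⟨z, _, rfl⟩ := Finset.mem_image.1 hw
      by_cases hz : z = z0
      · rw [hcf]; simp only [g, hz, if_pos rfl]; exact hyy.symm
      · rw [hcf]; simp only [g, if_neg hz]
    exact hne2 ((key u hu).trans (key v hv).symm)
  rw [himg, Finset.card_image_of_injective _ hfinj, Finset.card_univ, Fintype.card_fin]

lemma col_coloring {a b m ℓ : ℕ} (hm : 2 ≤ m) (ha : 1 < a) (hal : a < ℓ) (hlb : ℓ ≤ b) :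
    ∃ c : Fin a × Fin b × Fin m → ℕ,
      ((∀ e ∈ gridC a b m ℓ, ∃ u ∈ e, ∃ v ∈ e, u ≠ v ∧ c u = c v) ∧
       (∀ e ∈ gridD a b m, ∃ u ∈ e, ∃ v ∈ e, c u ≠ c v)) ∧
      (Finset.univ.image c).card = b := by
  classical
  have ha0 : (0 : ℕ) < a := by omega
  have hm0 : (0 : ℕ) < m := by omega
  refine ⟨fun p => p.2.1.val, ⟨?_, ?_⟩, ?_⟩
  · rintro e ⟨-, p, hp, q, hq, hpq, hcol⟩
    exact ⟨p, hp, q, hq, hpq, congrArg Fin.val hcol⟩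
  · rintro e ⟨hcard, -, hcol⟩
    push_neg at hcol
    have hne : e.Nonempty := by rw [← Finset.card_pos, hcard]; omega
    obtain ⟨p, hp⟩ := hne
    obtain ⟨q, hq, hqne⟩ := hcol p.2.1
    exact ⟨p, hp, q, hq, fun h => hqne (Fin.ext h.symm)⟩
  · have : Finset.univ.image (fun p : Fin a × Fin b × Fin m => p.2.1.val)
        = Finset.range b := by
      apply Finset.ext
      intro n
      simp only [Finset.mem_image, Finset.mem_univ, true_and, Finset.mem_range]
      constructor
      · rintro ⟨p, rfl⟩; exact p.2.1.isLt
      · intro hn; exact ⟨(⟨0, ha0⟩, ⟨n, hn⟩, ⟨0, hm0⟩), rfl⟩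
    rw [this, Finset.card_range]

lemma mid_coloring {a b m ℓ : ℕ} (hm : 2 ≤ m) (ha : 1 < a) (hal : a < ℓ) (hlb : ℓ ≤ b)
    (s : ℕ) (has : a ≤ s) (hsl : s ≤ ℓ - 1) :
    ∃ c : Fin a × Fin b × Fin m → ℕ,
      ((∀ e ∈ gridC a b m ℓ, ∃ u ∈ e, ∃ v ∈ e, u ≠ v ∧ c u = c v) ∧
       (∀ e ∈ gridD a b m, ∃ u ∈ e, ∃ v ∈ e, c u ≠ c v)) ∧
      (Finset.univ.image c).card = s := by
  classical
  have ha0 : (0 : ℕ) < a := by omega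
  have hm0 : (0 : ℕ) < m := by omega
  set c : Fin a × Fin b × Fin m → ℕ :=
    fun p => if p.1.val = 0 then a + min p.2.1.val (s - a) else p.1.val with hc
  have himg : Finset.univ.image c = Finset.Icc 1 s := by
    apply Finset.ext
    intro n
    simp only [Finset.mem_image, Finset.mem_univ, true_and, Finset.mem_Icc]
    constructor
    · rintro ⟨p, rfl⟩
      by_cases h : p.1.val = 0
      · simp only [hc, h, if_true]
        have h5 := min_le_right p.2.1.val (s - a)
        omega
      · simp only [hc, if_neg h]
        have := p.1.isLt
        omega
    · rintro ⟨h1, h2⟩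
      by_cases h : n < a
      · refine ⟨(⟨n, h⟩, ⟨0, by omega⟩, ⟨0, hm0⟩), ?_⟩
        simp only [hc]
        have hn0 : ¬ ((⟨n, h⟩ : Fin a) : ℕ) = 0 := by show ¬ n = 0; omega
        rw [if_neg hn0]
      · refine ⟨(⟨0, ha0⟩, ⟨n - a, by omega⟩, ⟨0, hm0⟩), ?_⟩
        simp only [hc, if_pos rfl]
        have : min (n - a) (s - a) = n - a := by omega
        rw [this]; omega
  have hcardimg : (Finset.univ.image c).card = s := by
    rw [himg, Nat.card_Icc]; omega
  refine ⟨c, ⟨?_, ?_⟩, hcardimg⟩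
  · rintro e ⟨hcard, -⟩
    apply Finset.exists_ne_map_eq_of_card_lt_of_maps_to
    · rw [hcard, hcardimg]; omega
    · exact fun p _ => Finset.mem_image_of_mem c (Finset.mem_univ p)
  · rintro e ⟨hcard, hrow, -⟩
    push_neg at hrow
    have hne : e.Nonempty := by rw [← Finset.card_pos, hcard]; omega
    obtain ⟨p, hp⟩ := hne
    obtain ⟨q, hq, hqne⟩ := hrow p.1
    refine ⟨p, hp, q, hq, fun hcpq => hqne ?_⟩
    -- colors separate rows
    by_cases h1 : p.1.val = 0 <;> by_cases h2 : q.1.val = 0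
    · exact Fin.ext (by omega)
    · simp only [hc, if_pos h1, if_neg h2] at hcpq
      have := q.1.isLt; omega
    · simp only [hc, if_neg h1, if_pos h2] at hcpq
      have := p.1.isLt; omega
    · simp only [hc, if_neg h1, if_neg h2] at hcpq
      exact Fin.ext hcpq.symm

theorem stmt12 (ℓ m a b : ℕ) (hm : 2 ≤ m) (ha : 1 < a) (hal : a < ℓ) (hlb : ℓ ≤ b) :
    ∀ s : ℕ,
      (∃ c : Fin a × Fin b × Fin m → ℕ,
          Proper (gridC a b m ℓ) (gridD a b m) c ∧ UsesExactly c s) ↔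
      ((a ≤ s ∧ s ≤ ℓ - 1) ∨ s = b) := by
  intro s
  constructor
  · rintro ⟨c, ⟨hC, hD⟩, hs⟩
    unfold UsesExactly at hs
    by_cases hcase : s ≤ ℓ - 1
    · exact Or.inl ⟨hs ▸ a_le_s hm ha (by omega) c hD, hcase⟩
    · refine Or.inr ?_
      rw [← hs]
      exact s_eq_b hm ha hal hlb c hC hD (by rw [hs]; omega)
  · rintro (⟨h1, h2⟩ | rfl)
    · obtain ⟨c, hP, hU⟩ := mid_coloring hm ha hal hlb s h1 h2
      exact ⟨c, hP, hU⟩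
    · obtain ⟨c, hP, hU⟩ := col_coloring hm ha hal hlb
      exact ⟨c, hP, hU⟩
end

section
/- Let H = H(ℓ, m, a, b) with 1 < a < ℓ ≤ b, m ≥ 2. Up to relabeling of colors, H has exactly one proper coloring using exactly b colors, namely the column-coloring. -/
theorem stmt13 (ℓ m a b : ℕ) (hm : 2 ≤ m) (ha : 1 < a) (hal : a < ℓ) (hlb : ℓ ≤ b) :
    (∃ c : Fin a × Fin b × Fin m → ℕ,
        Proper (gridC a b m ℓ) (gridD a b m) c ∧ UsesExactly c b ∧ IsColColoring c) ∧
    (∀ c : Fin a × Fin b × Fin m → ℕ,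
        Proper (gridC a b m ℓ) (gridD a b m) c → UsesExactly c b → IsColColoring c) := by
  have hb2 : 2 ≤ b := by omega
  have hl3 : 3 ≤ ℓ := by omega
  classical
  constructor
  · refine ⟨fun p => (p.2.1 : ℕ), ⟨?_, ?_⟩, ?_, ?_⟩
    · rintro e ⟨hcard, p, hp, q, hq, hpq, hcol⟩
      exact ⟨p, hp, q, hq, hpq, congrArg Fin.val hcol⟩
    · rintro e ⟨hcard, hrow, hcol⟩
      have hne : e.Nonempty := by
        rw [← Finset.card_pos, hcard]; omega
      obtain ⟨p, hp⟩ := hne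
      push_neg at hcol
      obtain ⟨q, hq, hqc⟩ := hcol p.2.1
      exact ⟨p, hp, q, hq, fun h => hqc ((Fin.val_injective h).symm)⟩
    · show (Finset.univ.image _).card = b
      have himg : Finset.univ.image (fun p : Fin a × Fin b × Fin m => (p.2.1 : ℕ))
          = Finset.range b := by
        ext n
        simp only [Finset.mem_image, Finset.mem_range, Finset.mem_univ, true_and]
        constructor
        · rintro ⟨p, rfl⟩; exact p.2.1.isLt
        · intro hn
          exact ⟨(⟨0, by omega⟩, ⟨n, hn⟩, ⟨0, by omega⟩), rfl⟩
      rw [himg, Finset.card_range]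
    · intro p q
      exact Fin.val_inj
  · intro c hc hU
    obtain ⟨hC, hD⟩ := hc
    unfold UsesExactly at hU
    -- Step A: columns are monochromatic
    have hmono : ∀ p q : Fin a × Fin b × Fin m, p.2.1 = q.2.1 → c p = c q := by
      intro p q hcol
      by_contra hne
      have hpq : p ≠ q := fun h => hne (by rw [h])
      set T : Finset ℕ := Finset.univ.image c with hT
      have hTcard : T.card = b := hU
      set T' : Finset ℕ := T \ {c p, c q} with hT'
      have hT'card : ℓ - 2 ≤ T'.card := by
        have h1 : T.card - ({c p, c q} : Finset ℕ).card ≤ T'.card :=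
          Finset.le_card_sdiff _ _
        have h2 : ({c p, c q} : Finset ℕ).card ≤ 2 := by
          apply le_trans (Finset.card_insert_le _ _); simp
        omega
      obtain ⟨T'', hsub, hT''card⟩ := Finset.exists_subset_card_eq hT'card
      let f : ℕ → Fin a × Fin b × Fin m := fun t =>
        if h : ∃ v, c v = t then h.choose else p
      have hf : ∀ t ∈ T'', c (f t) = t := by
        intro t ht
        have htT : t ∈ T := (Finset.mem_sdiff.mp (hsub ht)).1
        obtain ⟨v, -, hv⟩ := Finset.mem_image.mp htT
        have h : ∃ v, c v = t := ⟨v, hv⟩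
        simp only [f, dif_pos h]
        exact h.choose_spec
      have hcpT : ∀ t ∈ T'', t ≠ c p ∧ t ≠ c q := by
        intro t ht
        have h2 := (Finset.mem_sdiff.mp (hsub ht)).2
        simp only [Finset.mem_insert, Finset.mem_singleton, not_or] at h2
        exact h2
      set e : Finset (Fin a × Fin b × Fin m) := insert p (insert q (T''.image f)) with he
      have hqim : q ∉ T''.image f := by
        intro h
        obtain ⟨t, ht, hft⟩ := Finset.mem_image.mp h
        have hct := hf t ht
        rw [hft] at hct
        exact (hcpT t ht).2 hct.symm
      have hpim : p ∉ insert q (T''.image f) := by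
        simp only [Finset.mem_insert]
        rintro (rfl | h)
        · exact hpq rfl
        · obtain ⟨t, ht, hft⟩ := Finset.mem_image.mp h
          have hct := hf t ht
          rw [hft] at hct
          exact (hcpT t ht).1 hct.symm
      have hfinj : Set.InjOn f T'' := by
        intro s hs t ht hst
        have h1 := hf s hs
        rw [hst, hf t ht] at h1
        exact h1.symm
      have hecard : e.card = ℓ := by
        rw [he, Finset.card_insert_of_notMem hpim,
            Finset.card_insert_of_notMem hqim,
            Finset.card_image_of_injOn hfinj, hT''card]
        omega
      have heC : e ∈ gridC a b m ℓ :=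
        ⟨hecard, p, by simp [he], q, by simp [he], hpq, hcol⟩
      obtain ⟨u, hu, v, hv, huv, hcuv⟩ := hC e heC
      apply huv
      have hu' : u ∈ insert p (insert q (T''.image f)) := by rwa [← he]
      have hv' : v ∈ insert p (insert q (T''.image f)) := by rwa [← he]
      simp only [Finset.mem_insert, Finset.mem_image] at hu' hv'
      rcases hu' with rfl | rfl | ⟨s, hs, rfl⟩ <;>
        rcases hv' with rfl | rfl | ⟨t, ht, rfl⟩
      · rfl
      · exact absurd hcuv hne
      · exact absurd (hcuv.trans (hf t ht)).symm (hcpT t ht).1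
      · exact absurd hcuv.symm hne
      · rfl
      · exact absurd (hcuv.trans (hf t ht)).symm (hcpT t ht).2
      · exact absurd ((hf s hs).symm.trans hcuv) (hcpT s hs).1
      · exact absurd ((hf s hs).symm.trans hcuv) (hcpT s hs).2
      · exact congrArg f (((hf s hs).symm.trans hcuv).trans (hf t ht))
    -- Step B: distinct columns get distinct colors
    have key : ∀ p q : Fin a × Fin b × Fin m, c p = c q → p.2.1 = q.2.1 := by
      intro p q hceq
      by_contra hcol
      set x0 : Fin a := ⟨0, by omega⟩ with hx0
      set x1 : Fin a := ⟨1, by omega⟩ with hx1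
      set S : Finset (Fin a × Fin b × Fin m) :=
        (Finset.univ.erase (⟨0, by omega⟩ : Fin m)).image (fun k => (x0, p.2.1, k)) with hS
      set v : Fin a × Fin b × Fin m := (x1, q.2.1, ⟨0, by omega⟩) with hv
      have hvS : v ∉ S := by
        intro hmem
        obtain ⟨k, -, hk⟩ := Finset.mem_image.mp hmem
        rw [hv, Prod.mk.injEq, Prod.mk.injEq] at hk
        exact hcol hk.2.1
      have hScard : S.card = m - 1 := by
        rw [hS, Finset.card_image_of_injective _ (fun k1 k2 h => by
          simpa using h)]
        rw [Finset.card_erase_of_mem (Finset.mem_univ _)]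
        simp
      set E : Finset (Fin a × Fin b × Fin m) := insert v S with hE
      have hEcard : E.card = m := by
        rw [hE, Finset.card_insert_of_notMem hvS, hScard]; omega
      have hk1 : (x0, p.2.1, (⟨1, by omega⟩ : Fin m)) ∈ S := by
        rw [hS]
        apply Finset.mem_image.mpr
        refine ⟨⟨1, by omega⟩, ?_, rfl⟩
        apply Finset.mem_erase.mpr
        refine ⟨?_, Finset.mem_univ _⟩
        intro h
        have := congrArg Fin.val h
        simp [Fin.val_zero] at this
      have hED : E ∈ gridD a b m := by
        refine ⟨hEcard, ?_, ?_⟩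
        · rintro ⟨x, hx⟩
          have h1 : x1 = x := hx v (Finset.mem_insert_self _ _)
          have h0 : x0 = x := hx (x0, p.2.1, ⟨1, by omega⟩)
            (Finset.mem_insert_of_mem hk1)
          rw [← h1] at h0
          have := congrArg Fin.val h0
          simp [hx0, hx1] at this
        · rintro ⟨y, hy⟩
          have h1 : q.2.1 = y := hy v (Finset.mem_insert_self _ _)
          have h0 : p.2.1 = y := hy (x0, p.2.1, ⟨1, by omega⟩)
            (Finset.mem_insert_of_mem hk1)
          exact hcol (h0.trans h1.symm)
      obtain ⟨u, hu, w, hw, hcuw⟩ := hD E hED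
      apply hcuw
      have hcolor : ∀ z ∈ E, c z = c p := by
        intro z hz
        rw [hE] at hz
        rcases Finset.mem_insert.mp hz with hzv | hzS
        · rw [hzv, hv]
          exact (hmono (x1, q.2.1, ⟨0, by omega⟩) q rfl).trans hceq.symm
        · obtain ⟨k, -, rfl⟩ := Finset.mem_image.mp hzS
          exact hmono _ p rfl
      rw [hcolor u hu, hcolor w hw]
    intro p q
    exact ⟨key p q, hmono p q⟩
end

section
/- If H is an (ℓ, m)-uniform mixed hypergraph with ℓ ≥ 3, |V(H)| ≥ ℓ - 1 and 2 ∈ S(H), then {2, 3, ..., ℓ - 1} ⊆ S(H). -/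
theorem stmt15 {V : Type} [Fintype V] [DecidableEq V] (C D : Set (Finset V)) (ℓ m : ℕ)
    (hl : 3 ≤ ℓ) (hC : ∀ e ∈ C, e.card = ℓ) (hD : ∀ e ∈ D, e.card = m)
    (hV : ℓ - 1 ≤ Fintype.card V)
    (h2 : ∃ c : V → ℕ, Proper C D c ∧ UsesExactly c 2) :
    ∀ s : ℕ, 2 ≤ s → s ≤ ℓ - 1 →
      ∃ c : V → ℕ, Proper C D c ∧ UsesExactly c s := by
  intro s hs2 hsl
  obtain ⟨c0, ⟨hC0, hD0⟩, hU⟩ := h2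
  obtain ⟨x, y, hxy, hIm⟩ := Finset.card_eq_two.mp hU
  classical
  set A : Finset V := Finset.univ.filter (fun v => c0 v = x) with hA
  set B : Finset V := Finset.univ.filter (fun v => ¬ c0 v = x) with hB
  have hmemA : ∀ v, v ∈ A ↔ c0 v = x := by intro v; simp [hA]
  have hmemB : ∀ v, v ∉ A → v ∈ B := by
    intro v hv; simp [hB]; intro h; exact hv ((hmemA v).mpr h)
  have hBx : ∀ v, v ∈ B → c0 v ≠ x := by intro v hv; simp [hB] at hv; exact hv
  have hab : A.card + B.card = Fintype.card V := by
    simpa [hA, hB] using Finset.card_filter_add_card_filter_not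
      (s := (Finset.univ : Finset V)) (p := fun v => c0 v = x)
  have hAne : 0 < A.card := by
    have : x ∈ Finset.univ.image c0 := by rw [hIm]; simp
    obtain ⟨v, _, hv⟩ := Finset.mem_image.mp this
    exact Finset.card_pos.mpr ⟨v, (hmemA v).mpr hv⟩
  have hBne : 0 < B.card := by
    have : y ∈ Finset.univ.image c0 := by rw [hIm]; simp
    obtain ⟨v, _, hv⟩ := Finset.mem_image.mp this
    refine Finset.card_pos.mpr ⟨v, ?_⟩
    apply hmemB; rw [hmemA]; rw [hv]; exact fun h => hxy h.symm
  have hsV : s ≤ A.card + B.card := by omega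
  set a' : ℕ := min A.card (s - 1) with ha'
  set b' : ℕ := s - a' with hb'
  have ha'1 : 1 ≤ a' := by omega
  have ha'A : a' ≤ A.card := min_le_left _ _
  have hb'1 : 1 ≤ b' := by omega
  have hb'B : b' ≤ B.card := by omega
  have hs' : a' + b' = s := by omega
  let f : V → ℕ := fun v =>
    if h : v ∈ A then 2 * min ((A.equivFin ⟨v, h⟩ : Fin A.card) : ℕ) (a' - 1)
    else 2 * min ((B.equivFin ⟨v, hmemB v h⟩ : Fin B.card) : ℕ) (b' - 1) + 1
  have hfA : ∀ v (h : v ∈ A), f v = 2 * min ((A.equivFin ⟨v, h⟩ : Fin A.card) : ℕ) (a' - 1) := by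
    intro v h; simp only [f, dif_pos h]
  have hfB : ∀ v (h : v ∉ A), f v = 2 * min ((B.equivFin ⟨v, hmemB v h⟩ : Fin B.card) : ℕ) (b' - 1) + 1 := by
    intro v h; simp only [f, dif_neg h]
  have hImg : Finset.univ.image f =
      ((Finset.range a').image (fun j => 2 * j)) ∪ ((Finset.range b').image (fun j => 2 * j + 1)) := by
    ext k
    simp only [Finset.mem_image, Finset.mem_union, Finset.mem_univ, true_and, Finset.mem_range]
    constructor
    · rintro ⟨v, rfl⟩
      by_cases h : v ∈ A
      · left
        exact ⟨min ((A.equivFin ⟨v, h⟩ : Fin A.card) : ℕ) (a' - 1), by omega, (hfA v h).symm⟩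
      · right
        exact ⟨min ((B.equivFin ⟨v, hmemB v h⟩ : Fin B.card) : ℕ) (b' - 1), by omega, (hfB v h).symm⟩
    · rintro (⟨j, hj, rfl⟩ | ⟨j, hj, rfl⟩)
      · have hja : j < A.card := lt_of_lt_of_le hj ha'A
        refine ⟨(A.equivFin.symm ⟨j, hja⟩ : V), ?_⟩
        have hmem := (A.equivFin.symm ⟨j, hja⟩).2
        rw [hfA _ hmem]
        have : (⟨(A.equivFin.symm ⟨j, hja⟩ : V), hmem⟩ : {v // v ∈ A}) = A.equivFin.symm ⟨j, hja⟩ :=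
          Subtype.ext rfl
        rw [this, Equiv.apply_symm_apply]
        simp only []
        omega
      · have hjb : j < B.card := lt_of_lt_of_le hj hb'B
        refine ⟨(B.equivFin.symm ⟨j, hjb⟩ : V), ?_⟩
        have hmem := (B.equivFin.symm ⟨j, hjb⟩).2
        have hnA : (B.equivFin.symm ⟨j, hjb⟩ : V) ∉ A := by
          intro h; exact hBx _ hmem ((hmemA _).mp h)
        rw [hfB _ hnA]
        have : (⟨(B.equivFin.symm ⟨j, hjb⟩ : V), hmemB _ hnA⟩ : {v // v ∈ B}) = B.equivFin.symm ⟨j, hjb⟩ :=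
          Subtype.ext rfl
        rw [this, Equiv.apply_symm_apply]
        simp only []
        omega
  have hcard : (Finset.univ.image f).card = s := by
    rw [hImg]
    rw [Finset.card_union_of_disjoint]
    · rw [Finset.card_image_of_injective _ (fun a b h => by omega),
        Finset.card_image_of_injective _ (fun a b h => by omega),
        Finset.card_range, Finset.card_range, hs']
    · rw [Finset.disjoint_left]
      rintro k hk hk'
      simp only [Finset.mem_image, Finset.mem_range] at hk hk'
      obtain ⟨j, _, rfl⟩ := hk
      obtain ⟨j', _, hj'⟩ := hk'
      omega
  refine ⟨f, ⟨?_, ?_⟩, hcard⟩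
  · intro e he
    have hcardle : (Finset.univ.image f).card < e.card := by
      rw [hcard, hC e he]; omega
    obtain ⟨u, hu, v, hv, huv, hfe⟩ := Finset.exists_ne_map_eq_of_card_lt_of_maps_to hcardle
      (fun v _ => Finset.mem_image_of_mem f (Finset.mem_univ v))
    exact ⟨u, hu, v, hv, huv, hfe⟩
  · intro e he
    obtain ⟨u, hu, v, hv, huv⟩ := hD0 e he
    refine ⟨u, hu, v, hv, ?_⟩
    by_cases hAu : u ∈ A <;> by_cases hAv : v ∈ A
    · exact absurd (((hmemA u).mp hAu).trans ((hmemA v).mp hAv).symm) huv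
    · rw [hfA u hAu, hfB v hAv]; omega
    · rw [hfB u hAu, hfA v hAv]; omega
    · exfalso
      have hu' : c0 u ∈ Finset.univ.image c0 := Finset.mem_image_of_mem c0 (Finset.mem_univ u)
      have hv' : c0 v ∈ Finset.univ.image c0 := Finset.mem_image_of_mem c0 (Finset.mem_univ v)
      rw [hIm] at hu' hv'
      simp only [Finset.mem_insert, Finset.mem_singleton] at hu' hv'
      have h1 : c0 u ≠ x := fun h => hAu ((hmemA u).mpr h)
      have h2 : c0 v ≠ x := fun h => hAv ((hmemA v).mpr h)
      rcases hu' with h | h <;> rcases hv' with h' | h' <;> first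
        | exact h1 h | exact h2 h' | exact huv (h.trans h'.symm)
end

section
/- For every m ≥ 2 and integers 1 ≤ a ≤ b, there exists a (2, m)-uniform mixed hypergraph H with feasible set exactly [a, b]. Concretely: let V be the disjoint union of sets V_1, ..., V_b each of size m; let C be all pairs of vertices lying in a common V_i; for a > 1 let D be all m-subsets of V_1 ∪ ... ∪ V_a meeting exactly two of the V_i with i ≤ a and no V_j with j > a (and D = ∅ if a = 1). Then S(H) = [a, b]. -/
set_option maxHeartbeats 1000000 in
theorem stmt17 (m a b : ℕ) (hm : 2 ≤ m) (ha : 1 ≤ a) (hab : a ≤ b) :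
    ∀ s : ℕ,
      (∃ c : Fin b × Fin m → ℕ,
          Proper
            -- C-edges: all pairs of vertices lying in a common part V_i
            {e : Finset (Fin b × Fin m) | e.card = 2 ∧ ∃ i, ∀ p ∈ e, p.1 = i}
            -- D-edges: m-subsets of V_1 ∪ ... ∪ V_a meeting exactly two parts
            -- (empty collection when a = 1)
            {e : Finset (Fin b × Fin m) | 1 < a ∧ e.card = m ∧
              (e.image Prod.fst).card = 2 ∧ ∀ p ∈ e, (p.1 : ℕ) < a}
            c ∧
          UsesExactly c s) ↔
      (a ≤ s ∧ s ≤ b) := by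
  have hm0 : 0 < m := by omega
  have hm1 : 1 < m := by omega
  have hb : 0 < b := by omega
  set z0 : Fin m := ⟨0, hm0⟩ with hz0
  set z1 : Fin m := ⟨1, hm1⟩ with hz1
  intro s
  constructor
  · rintro ⟨c, ⟨hC, hD⟩, hs⟩
    -- each part is monochromatic
    have mono : ∀ (i : Fin b) (x y : Fin m), c (i, x) = c (i, y) := by
      intro i x y
      rcases eq_or_ne x y with h | h
      · rw [h]
      · have hne : ((i, x) : Fin b × Fin m) ≠ (i, y) := by simp [h]
        have hmem : ({(i, x), (i, y)} : Finset (Fin b × Fin m)) ∈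
            {e : Finset (Fin b × Fin m) | e.card = 2 ∧ ∃ i, ∀ p ∈ e, p.1 = i} := by
          refine ⟨?_, ⟨i, ?_⟩⟩
          · rw [Finset.card_insert_of_notMem (by simp [hne]), Finset.card_singleton]
          · intro p hp
            simp only [Finset.mem_insert, Finset.mem_singleton] at hp
            rcases hp with rfl | rfl <;> rfl
        obtain ⟨u, hu, v, hv, huv, hcv⟩ := hC _ hmem
        simp only [Finset.mem_insert, Finset.mem_singleton] at hu hv
        rcases hu with rfl | rfl <;> rcases hv with rfl | rfl <;> simp_all
    set g : Fin b → ℕ := fun i => c (i, z0) with hg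
    -- image of c equals image of g
    have himg : Finset.univ.image c = Finset.univ.image g := by
      ext n
      simp only [Finset.mem_image, Finset.mem_univ, true_and]
      constructor
      · rintro ⟨⟨i, x⟩, h⟩
        exact ⟨i, by rw [hg]; rw [← h]; exact (mono i x z0).symm⟩
      · rintro ⟨i, h⟩
        exact ⟨(i, z0), h⟩
    have hs' : (Finset.univ.image g).card = s := by rw [← himg]; exact hs
    -- distinct parts among the first a get distinct colors
    have hkey : ∀ i j : Fin b, (i : ℕ) < a → (j : ℕ) < a → i ≠ j → g i ≠ g j := by
      intro i j hia hja hij hgij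
      have hija : 1 < a := by
        have : (i : ℕ) ≠ (j : ℕ) := fun h => hij (Fin.ext h)
        omega
      set A : Finset (Fin b × Fin m) := Finset.univ.image (fun x : Fin m => (i, x)) with hA
      set e : Finset (Fin b × Fin m) := insert (j, z0) (A.erase (i, z0)) with he
      have hAmem : ∀ p : Fin b × Fin m, p ∈ A ↔ p.1 = i := by
        rintro ⟨p1, p2⟩
        simp only [hA, Finset.mem_image, Finset.mem_univ, true_and, Prod.mk.injEq]
        constructor
        · rintro ⟨x, hx1, hx2⟩; exact hx1.symm
        · rintro rfl; exact ⟨p2, rfl, rfl⟩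
      have hemem : ∀ p : Fin b × Fin m, p ∈ e ↔ p = (j, z0) ∨ (p.1 = i ∧ p ≠ (i, z0)) := by
        intro p
        simp only [he, Finset.mem_insert, Finset.mem_erase, hAmem]
        tauto
      have hAcard : A.card = m := by
        rw [hA, Finset.card_image_of_injective _ (fun x y h => by simpa using h),
          Finset.card_univ, Fintype.card_fin]
      have hjz : ((j, z0) : Fin b × Fin m) ∉ A.erase (i, z0) := by
        intro h
        have := (hAmem _).mp (Finset.mem_of_mem_erase h)
        exact hij this.symm
      have hecard : e.card = m := by
        rw [he, Finset.card_insert_of_notMem hjz,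
          Finset.card_erase_of_mem ((hAmem _).mpr rfl), hAcard]
        omega
      have hefst : e.image Prod.fst = {j, i} := by
        ext k
        simp only [Finset.mem_image, Finset.mem_insert, Finset.mem_singleton]
        constructor
        · rintro ⟨p, hp, rfl⟩
          rcases (hemem p).mp hp with rfl | ⟨h1, _⟩
          · exact Or.inl rfl
          · exact Or.inr h1
        · rintro (rfl | rfl)
          · exact ⟨(k, z0), (hemem _).mpr (Or.inl rfl), rfl⟩
          · refine ⟨(k, z1), (hemem _).mpr (Or.inr ⟨rfl, ?_⟩), rfl⟩
            simp [hz0, hz1, Prod.ext_iff, Fin.ext_iff]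
      have hefstcard : (e.image Prod.fst).card = 2 := by
        rw [hefst, Finset.card_insert_of_notMem (by simp [hij.symm]), Finset.card_singleton]
      have hemD : e ∈ {e : Finset (Fin b × Fin m) | 1 < a ∧ e.card = m ∧
          (e.image Prod.fst).card = 2 ∧ ∀ p ∈ e, (p.1 : ℕ) < a} := by
        refine ⟨hija, hecard, hefstcard, ?_⟩
        intro p hp
        rcases (hemem p).mp hp with rfl | ⟨h1, _⟩
        · exact hja
        · rw [h1]; exact hia
      obtain ⟨u, hu, v, hv, hcuv⟩ := hD _ hemD
      have hval : ∀ p ∈ e, c p = g i := by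
        intro p hp
        rcases (hemem p).mp hp with rfl | ⟨h1, _⟩
        · exact hgij.symm
        · calc c p = c (p.1, p.2) := by rfl
            _ = c (p.1, z0) := mono _ _ _
            _ = g i := by rw [h1]
      exact hcuv ((hval u hu).trans (hval v hv).symm)
    -- a ≤ s
    refine ⟨?_, ?_⟩
    · have hT : (Finset.univ.image (Fin.castLE hab) : Finset (Fin b)).card = a := by
        rw [Finset.card_image_of_injective _ (Fin.castLE_injective hab),
          Finset.card_univ, Fintype.card_fin]
      rw [← hs', ← hT]
      apply Finset.card_le_card_of_injOn g
      · intro i hi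
        exact Finset.mem_image_of_mem g (Finset.mem_univ i)
      · intro i hi j hj hgij
        by_contra hij
        simp only [Finset.coe_image, Set.mem_image] at hi hj
        obtain ⟨i', _, rfl⟩ := hi
        obtain ⟨j', _, rfl⟩ := hj
        exact hkey _ _ (by simp) (by simp) hij hgij
    · rw [← hs']
      calc (Finset.univ.image g).card ≤ Finset.univ.card := Finset.card_image_le
        _ = b := by rw [Finset.card_univ, Fintype.card_fin]
  · rintro ⟨has, hsb⟩
    have hs1 : 1 ≤ s := le_trans ha has
    refine ⟨fun p => min (p.1 : ℕ) (s - 1), ⟨?_, ?_⟩, ?_⟩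
    · rintro e ⟨hcard, i, hi⟩
      obtain ⟨u, v, huv, rfl⟩ := Finset.card_eq_two.mp hcard
      have hu1 : u.1 = i := hi u (Finset.mem_insert_self u {v})
      have hv1 : v.1 = i := hi v (Finset.mem_insert_of_mem (Finset.mem_singleton_self v))
      refine ⟨u, Finset.mem_insert_self u {v},
        v, Finset.mem_insert_of_mem (Finset.mem_singleton_self v), huv, ?_⟩
      show min (u.1 : ℕ) (s - 1) = min (v.1 : ℕ) (s - 1)
      rw [hu1, hv1]
    · rintro e ⟨hia, hcard, hfst, hlt⟩
      obtain ⟨i, j, hij, hij2⟩ := Finset.card_eq_two.mp hfst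
      have hi : i ∈ e.image Prod.fst := by rw [hij2]; simp
      have hj : j ∈ e.image Prod.fst := by rw [hij2]; simp
      obtain ⟨u, hu, hu1⟩ := Finset.mem_image.mp hi
      obtain ⟨v, hv, hv1⟩ := Finset.mem_image.mp hj
      refine ⟨u, hu, v, hv, ?_⟩
      have hua : (u.1 : ℕ) < a := hlt u hu
      have hva : (v.1 : ℕ) < a := hlt v hv
      have h1 : min (u.1 : ℕ) (s - 1) = (u.1 : ℕ) := by omega
      have h2 : min (v.1 : ℕ) (s - 1) = (v.1 : ℕ) := by omega
      show min (u.1 : ℕ) (s - 1) ≠ min (v.1 : ℕ) (s - 1)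
      rw [h1, h2]
      intro heq
      exact hij (by rw [← hu1, ← hv1]; exact Fin.ext heq)
    · show (Finset.univ.image _).card = s
      have : (Finset.univ.image fun p : Fin b × Fin m => min (p.1 : ℕ) (s - 1)) =
          Finset.range s := by
        ext n
        simp only [Finset.mem_image, Finset.mem_univ, true_and, Finset.mem_range]
        constructor
        · rintro ⟨p, rfl⟩
          omega
        · intro hn
          exact ⟨(⟨n, lt_of_lt_of_le hn hsb⟩, z0), by simp; omega⟩
      rw [this, Finset.card_range]
end

section
/- Let ℓ ≥ 3, m ≥ 2, and let S be a finite set of integers with min(S) ≥ ℓ, together with a function r : S → ℕ \ {0}. Then there exists an (ℓ, m)-uniform mixed hypergraph H such that S(H) = S and for every s ∈ S the number of proper colorings of H with exactly s colors, counted up to relabeling of colors, equals r(s). -/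
/-- The partition of the vertex set into color classes induced by a coloring. -/
def colorClasses {V : Type} [Fintype V] [DecidableEq V] (c : V → ℕ) :
    Finset (Finset V) :=
  Finset.univ.image (fun v => Finset.univ.filter (fun u => c u = c v))

open Finset

theorem Finset.exists_subset_forall_eq_of_mul_lt_card {α β : Type*} [DecidableEq β] {s : Finset α}
    {c : α → β} {q : ℕ} (hq : #(s.image c) * (q - 1) < #s) :
    ∃ e ⊆ s, #e = q ∧ ∃ a, ∀ x ∈ e, c x = a := by
  obtain ⟨a, -, ha⟩ := exists_lt_card_fiber_of_mul_lt_card_of_maps_to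
    (fun x hx => mem_image_of_mem c hx) hq
  obtain ⟨e, hes, he⟩ := exists_subset_card_eq (s := s.filter (c · = a)) (n := q) (by omega)
  exact ⟨e, hes.trans (filter_subset _ _), he, a, fun x hx => (mem_filter.1 (hes hx)).2⟩

theorem Finset.exists_subset_injOn_of_le_card_image {α β : Type*} [DecidableEq β] {s : Finset α}
    {c : α → β} {q : ℕ} (hq : q ≤ #(s.image c)) : ∃ e ⊆ s, #e = q ∧ Set.InjOn c e := by
  obtain ⟨t, hts, rfl⟩ := exists_subset_card_eq hq
  have hsurj : Set.SurjOn c s t := fun a ha => by simpa using hts ha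
  obtain ⟨e, hes, hinj, rfl⟩ := exists_subset_injOn_image_eq_of_surjOn _ _ hsurj
  exact ⟨e, by exact_mod_cast hes, (card_image_of_injOn hinj).symm, hinj⟩

section Colorings

variable {V : Type}

theorem Proper.not_injOn {C D : Set (Finset V)} {c : V → ℕ} (hc : Proper C D c) {e : Finset V}
    (he : e ∈ C) : ¬ Set.InjOn c e := by
  obtain ⟨u, hu, v, hv, huv, hcuv⟩ := hc.1 e he
  exact fun hinj => huv (hinj hu hv hcuv)

theorem Proper.not_forall_eq {C D : Set (Finset V)} {c : V → ℕ} (hc : Proper C D c)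
    {e : Finset V} (he : e ∈ D) (a : ℕ) : ¬ ∀ x ∈ e, c x = a := by
  obtain ⟨u, hu, v, hv, huv⟩ := hc.2 e he
  exact fun h => huv ((h u hu).trans (h v hv).symm)

theorem not_proper_of_mul_lt_card [Fintype V] {ℓ m : ℕ} (hV : (ℓ - 1) * (m - 1) < Fintype.card V)
    (c : V → ℕ) : ¬ Proper {e | #e = ℓ} {e | #e = m} c := by
  intro hc
  by_cases hℓ : ℓ ≤ #(univ.image c)
  · obtain ⟨e, -, he, hinj⟩ := exists_subset_injOn_of_le_card_image hℓ
    exact hc.not_injOn he hinj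
  · have hlt : #(univ.image c) * (m - 1) < #(univ : Finset V) := by
      rw [card_univ]
      exact lt_of_le_of_lt (Nat.mul_le_mul_right _ (by omega)) hV
    obtain ⟨e, -, he, a, hea⟩ := exists_subset_forall_eq_of_mul_lt_card hlt
    exact hc.not_forall_eq he a hea

variable [Fintype V] [DecidableEq V]

theorem card_colorClasses (c : V → ℕ) : #(colorClasses c) = #(univ.image c) := by
  have : colorClasses c = (univ.image c).image (fun a => univ.filter (c · = a)) := by
    rw [image_image]; rfl
  rw [this]
  refine card_image_of_injOn fun a ha b hb hab => ?_
  obtain ⟨x, -, rfl⟩ := mem_image.1 ha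
  have hx : x ∈ univ.filter (c · = c x) := by simp
  rw [hab] at hx
  exact (mem_filter.1 hx).2

theorem colorClasses_eq_iff {c c' : V → ℕ} :
    colorClasses c = colorClasses c' ↔ ∀ x y, c x = c y ↔ c' x = c' y := by
  refine ⟨fun h x y => ?_, fun h => ?_⟩
  · have hx : univ.filter (c · = c x) ∈ colorClasses c' := h ▸ mem_image_of_mem _ (mem_univ x)
    obtain ⟨w, -, hw⟩ := mem_image.1 hx
    have hmem : ∀ z, c' z = c' w ↔ c z = c x := by simpa [Finset.ext_iff] using hw
    rw [eq_comm, ← hmem, (hmem x).2 rfl, eq_comm]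
  · unfold colorClasses
    congr! 2 with v
    ext u
    simp [h u v]

end Colorings

section Grid

variable {T : Type} {d : T → ℕ}

theorem exists_forall_ne_ne (hd : ∀ t, 3 ≤ d t) (a b : ∀ t, Fin (d t)) :
    ∃ z : ∀ t, Fin (d t), ∀ t, z t ≠ a t ∧ z t ≠ b t := by
  choose z hz using fun t => Fin.exists_ne_and_ne_of_two_lt (a t) (b t) (hd t)
  exact ⟨z, hz⟩

def CoordRepeats (u v w : ∀ t, Fin (d t)) : Prop :=
  ∀ t, u t = v t ∨ u t = w t ∨ v t = w t

def agreeSet [Fintype T] (u v : ∀ t, Fin (d t)) : Finset T :=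
  univ.filter fun t => u t = v t

theorem mem_agreeSet [Fintype T] {u v : ∀ t, Fin (d t)} {t : T} :
    t ∈ agreeSet u v ↔ u t = v t := by
  simp [agreeSet]

theorem card_agreeSet_update_le_one [Fintype T] [DecidableEq T] {u f : ∀ t, Fin (d t)}
    (hf : ∀ t, f t ≠ u t) {t₀ : T} : #(agreeSet u (Function.update f t₀ (u t₀))) ≤ 1 := by
  refine card_le_one.2 fun a ha b hb => ?_
  have key : ∀ t ∈ agreeSet u (Function.update f t₀ (u t₀)), t = t₀ := fun t ht => by
    by_contra h
    exact hf t (by simpa [h] using (mem_agreeSet.1 ht).symm)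
  rw [key a ha, key b hb]

theorem agreeSet_update_ite_ssubset [Fintype T] [DecidableEq T] {u v f : ∀ t, Fin (d t)}
    (hf : ∀ t, f t ≠ u t) {t₀ : T} (ht₀ : u t₀ = v t₀) :
    agreeSet (Function.update u t₀ (f t₀)) (fun t => if u t = v t then u t else f t) ⊂
      agreeSet u v := by
  refine (ssubset_iff_of_subset fun t ht => ?_).2 ⟨t₀, mem_agreeSet.2 ht₀, fun ht => ?_⟩
  · have h := mem_agreeSet.1 ht
    by_cases htt : t = t₀
    · subst htt
      simp only [Function.update_self, if_pos ht₀] at h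
      exact absurd h (hf t)
    · rw [mem_agreeSet]
      by_contra hne
      simp only [Function.update_of_ne htt, if_neg hne] at h
      exact hf t h.symm
  · have h := mem_agreeSet.1 ht
    simp only [Function.update_self, if_pos ht₀] at h
    exact hf t₀ h

/-- A proper coloring of the mixed hypergraph on the grid `∏ t, Fin (d t)` whose `D`-edges are
the pairs differing in every coordinate and whose `C`-edges are the triples repeating a value in
every coordinate. -/
structure IsGridColoring (φ : (∀ t, Fin (d t)) → ℕ) : Prop where
  ne_of_forall_ne : ∀ u v, (∀ t, u t ≠ v t) → φ u ≠ φ v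
  eq_of_coordRepeats : ∀ u v w, u ≠ v → u ≠ w → v ≠ w → CoordRepeats u v w →
    φ u = φ v ∨ φ u = φ w ∨ φ v = φ w

namespace IsGridColoring

variable {φ : (∀ t, Fin (d t)) → ℕ} (hφ : IsGridColoring φ)
include hφ

theorem apply_eq_of_forall_ne {u x z : ∀ t, Fin (d t)} (hux : φ u ≠ φ x)
    (hzu : ∀ t, z t ≠ u t) (hcov : ∀ t, u t = x t ∨ x t = z t) : φ z = φ x := by
  by_cases hzx : z = x
  · rw [hzx]
  have huz : φ u ≠ φ z := hφ.ne_of_forall_ne u z fun t h => hzu t h.symm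
  rcases hφ.eq_of_coordRepeats u x z (fun h => hux (h ▸ rfl)) (fun h => huz (h ▸ rfl))
    (Ne.symm hzx) (fun t => (hcov t).imp_right Or.inr) with h | h | h
  · exact absurd h hux
  · exact absurd h huz
  · exact h.symm

theorem apply_eq_of_agree (hd : ∀ t, 3 ≤ d t) {u v y : ∀ t, Fin (d t)} (huv : φ u = φ v)
    (hy : ∀ t, u t = v t → y t = u t) : φ y = φ u := by
  by_contra hyu
  obtain ⟨f, hf⟩ := exists_forall_ne_ne hd u v
  let z : ∀ t, Fin (d t) := fun t => if y t = u t then f t else u t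
  have hz : φ z = φ u := hφ.apply_eq_of_forall_ne hyu
    (fun t => by
      by_cases h : y t = u t
      · simpa [z, h] using (hf t).1
      · simpa [z, h] using Ne.symm h)
    (fun t => by by_cases h : y t = u t <;> simp [z, h])
  refine hφ.ne_of_forall_ne v z (fun t => ?_) (huv ▸ hz.symm)
  by_cases h : y t = u t
  · simpa [z, h] using (hf t).2.symm
  · simpa [z, h] using fun hvu => h (hy t hvu.symm)

variable [DecidableEq T]

theorem exists_card_agreeSet_lt [Fintype T] (hd : ∀ t, 3 ≤ d t) {u v : ∀ t, Fin (d t)}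
    (huv : φ u = φ v) {t₀ s₀ : T} (ht₀ : u t₀ = v t₀) (hs₀ : u s₀ = v s₀) (hst : s₀ ≠ t₀) :
    ∃ u' v', u' ≠ v' ∧ φ u' = φ v' ∧ #(agreeSet u' v') < #(agreeSet u v) := by
  obtain ⟨f, hf⟩ := exists_forall_ne_ne hd u u
  have hfu (t : T) : f t ≠ u t := (hf t).1
  have htwo : 1 < #(agreeSet u v) := one_lt_card.2
    ⟨t₀, mem_agreeSet.2 ht₀, s₀, mem_agreeSet.2 hs₀, hst.symm⟩
  let w := Function.update f t₀ (u t₀)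
  by_cases hwu : φ w = φ u
  · refine ⟨u, w, fun h => hfu s₀ ?_, hwu.symm, (card_agreeSet_update_le_one hfu).trans_lt htwo⟩
    simpa [w, hst] using (congrFun h s₀).symm
  let z := Function.update u t₀ (f t₀)
  have hz : φ z = φ u := hφ.apply_eq_of_forall_ne hwu
    (fun t => by
      by_cases h : t = t₀
      · subst h; simpa [z, w] using hfu t
      · simpa [z, w, h] using Ne.symm (hfu t))
    (fun t => by
      by_cases h : t = t₀
      · subst h; simp [w]
      · simp [z, h])
  let y : ∀ t, Fin (d t) := fun t => if u t = v t then u t else f t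
  have hy : φ y = φ u := hφ.apply_eq_of_agree hd huv fun t h => by simp [y, h]
  refine ⟨z, y, fun h => hfu t₀ ?_, hz.trans hy.symm,
    card_lt_card (agreeSet_update_ite_ssubset hfu ht₀)⟩
  simpa [z, y, ht₀] using congrFun h t₀

theorem exists_agree_iff_eq [Fintype T] (hd : ∀ t, 3 ≤ d t)
    (h : ∃ u v : ∀ t, Fin (d t), u ≠ v ∧ φ u = φ v) :
    ∃ (u v : ∀ t, Fin (d t)) (ts : T), φ u = φ v ∧ ∀ t, u t = v t ↔ t = ts := by
  obtain ⟨⟨u, v⟩, hp, hmin⟩ :=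
    (univ.filter fun p : (∀ t, Fin (d t)) × (∀ t, Fin (d t)) => p.1 ≠ p.2 ∧ φ p.1 = φ p.2
      ).exists_min_image (fun p => #(agreeSet p.1 p.2)) (by simpa [Finset.Nonempty] using h)
  obtain ⟨-, huv⟩ := (mem_filter.1 hp).2
  obtain ⟨ts, hts⟩ : ∃ ts, u ts = v ts := by
    by_contra! hne
    exact hφ.ne_of_forall_ne u v hne huv
  refine ⟨u, v, ts, huv, fun t => ⟨fun ht => ?_, fun h => h ▸ hts⟩⟩
  by_contra hne
  obtain ⟨u', v', hne', huv', hlt⟩ := hφ.exists_card_agreeSet_lt hd huv hts ht hne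
  exact (hmin (u', v') (by simp [hne', huv'])).not_gt hlt

theorem apply_eq_iff_of_agree_iff (hd : ∀ t, 3 ≤ d t) {u v : ∀ t, Fin (d t)} {ts : T}
    (huv : φ u = φ v) (hts : ∀ t, u t = v t ↔ t = ts) (y : ∀ t, Fin (d t)) :
    φ y = φ u ↔ y ts = u ts := by
  have hclass : ∀ y : ∀ t, Fin (d t), y ts = u ts → φ y = φ u := fun y hy =>
    hφ.apply_eq_of_agree hd huv fun t ht => (hts t).1 ht ▸ hy
  refine ⟨fun hyu => ?_, hclass y⟩
  by_contra hne
  obtain ⟨f, hf⟩ := exists_forall_ne_ne hd y y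
  refine hφ.ne_of_forall_ne y (Function.update f ts (u ts)) (fun t => ?_)
    (hyu.trans (hclass _ (by simp)).symm)
  by_cases h : t = ts
  · subst h; simpa using hne
  · simpa [h] using Ne.symm (hf t).1

theorem apply_eq_of_apply_eq_at {u : ∀ t, Fin (d t)} {ts : T} (hu : ∀ y, φ y = φ u ↔ y ts = u ts)
    {x y : ∀ t, Fin (d t)} (hxy : x ts = y ts) : φ x = φ y := by
  by_cases hx : x ts = u ts
  · rw [(hu x).2 hx, (hu y).2 (hxy ▸ hx)]
  by_contra hne
  let z := Function.update x ts (u ts)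
  have hz : φ z = φ u := (hu z).2 (by simp [z])
  have hzx : x ≠ z := fun h => hx (by simpa [z] using congrFun h ts)
  have hzy : y ≠ z := fun h => hx (by simpa [z, hxy] using congrFun h ts)
  have hrep : CoordRepeats x y z := fun t => by
    by_cases h : t = ts
    · exact Or.inl (h ▸ hxy)
    · exact Or.inr (Or.inl (by simp [z, h]))
  rcases hφ.eq_of_coordRepeats x y z (fun h => hne (h ▸ rfl)) hzx hzy hrep with h | h | h
  · exact hne h
  · exact hx ((hu x).1 (h.trans hz))
  · exact hx (hxy ▸ (hu y).1 (h.trans hz))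

theorem exists_ne_apply_eq (hd : ∀ t, 3 ≤ d t) {t₁ t₂ : T} (ht : t₁ ≠ t₂) :
    ∃ u v : ∀ t, Fin (d t), u ≠ v ∧ φ u = φ v := by
  let u : ∀ t, Fin (d t) := fun t => ⟨0, by have := hd t; omega⟩
  obtain ⟨f, hf⟩ := exists_forall_ne_ne hd u u
  let v := Function.update f t₁ (u t₁)
  have huv : u ≠ v := fun h => (hf t₂).1 (by simpa [v, ht.symm] using (congrFun h t₂).symm)
  have huf : u ≠ f := fun h => (hf t₁).1 (congrFun h t₁).symm
  have hvf : v ≠ f := fun h => (hf t₁).1 (by simpa [v] using (congrFun h t₁).symm)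
  have hrep : CoordRepeats u v f := fun t => by
    by_cases h : t = t₁
    · subst h; exact Or.inl (by simp [v])
    · exact Or.inr (Or.inr (by simp [v, h]))
  rcases hφ.eq_of_coordRepeats u v f huv huf hvf hrep with h | h | h
  exacts [⟨u, v, huv, h⟩, ⟨u, f, huf, h⟩, ⟨v, f, hvf, h⟩]

theorem exists_apply_eq_iff [Fintype T] [Nonempty T] (hd : ∀ t, 3 ≤ d t) :
    ∃ ts : T, ∀ x y : ∀ t, Fin (d t), φ x = φ y ↔ x ts = y ts := by
  by_cases hpair : ∃ u v : ∀ t, Fin (d t), u ≠ v ∧ φ u = φ v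
  · obtain ⟨u, v, ts, huv, hts⟩ := hφ.exists_agree_iff_eq hd hpair
    have hu := hφ.apply_eq_iff_of_agree_iff hd huv hts
    refine ⟨ts, fun x y => ⟨fun hxy => ?_, hφ.apply_eq_of_apply_eq_at hu⟩⟩
    by_contra hne
    obtain ⟨f, hf⟩ := exists_forall_ne_ne hd x x
    have hy : φ (Function.update f ts (y ts)) = φ y := hφ.apply_eq_of_apply_eq_at hu (by simp)
    refine hφ.ne_of_forall_ne x _ (fun t => ?_) (hxy.trans hy.symm)
    by_cases h : t = ts
    · subst h; simpa using hne
    · simpa [h] using Ne.symm (hf t).1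
  · have : Subsingleton T := ⟨fun t₁ t₂ => by
      by_contra ht
      exact hpair (hφ.exists_ne_apply_eq hd ht)⟩
    obtain ⟨ts⟩ := ‹Nonempty T›
    refine ⟨ts, fun x y => ⟨fun h => ?_, fun h => ?_⟩⟩
    · by_contra hne
      exact hpair ⟨x, y, fun hxy => hne (hxy ▸ rfl), h⟩
    · exact congrArg φ (funext fun t => Subsingleton.elim ts t ▸ h)

end IsGridColoring

end Grid

namespace GridHypergraph

variable {T : Type} {d : T → ℕ} {k n m : ℕ}

abbrev Cell (d : T → ℕ) := ∀ t, Fin (d t)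

abbrev Block (d : T → ℕ) (k : ℕ) := Cell d ⊕ Fin k

abbrev Vertex (d : T → ℕ) (k n : ℕ) := Block d k × Fin (n + 1)

def BlockAdj : Block d k → Block d k → Prop
  | .inl u, .inl v => ∀ t, u t ≠ v t
  | .inr p, .inr q => p ≠ q
  | _, _ => True

theorem BlockAdj.ne [Nonempty T] {b b' : Block d k} (h : BlockAdj b b') : b ≠ b' := by
  rintro rfl
  rcases b with u | p
  · exact h (Classical.arbitrary T) rfl
  · exact h rfl

theorem blockAdj_inr_iff {p : Fin k} {b : Block d k} : BlockAdj (.inr p) b ↔ .inr p ≠ b := by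
  rcases b with u | q <;> simp [BlockAdj]

theorem apply_inr_eq_iff {φ : Block d k → ℕ} (hφ : ∀ b b', BlockAdj b b' → φ b ≠ φ b')
    (p : Fin k) (b : Block d k) : φ (.inr p) = φ b ↔ .inr p = b :=
  ⟨fun h => by_contra fun hne => hφ _ _ (blockAdj_inr_iff.2 hne) h, fun h => h ▸ rfl⟩

/-- Every extra block is adjacent to all other blocks, so colorings separating adjacent blocks
have the same color classes as soon as they have them on the cells. -/
theorem apply_eq_iff_of_forall_adj {φ ψ : Block d k → ℕ}
    (hφ : ∀ b b', BlockAdj b b' → φ b ≠ φ b') (hψ : ∀ b b', BlockAdj b b' → ψ b ≠ ψ b')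
    (hcell : ∀ u v, φ (.inl u) = φ (.inl v) ↔ ψ (.inl u) = ψ (.inl v)) (b b' : Block d k) :
    φ b = φ b' ↔ ψ b = ψ b' := by
  rcases b with u | p
  · rcases b' with v | q
    · exact hcell u v
    · rw [eq_comm, apply_inr_eq_iff hφ, eq_comm (a := ψ _), apply_inr_eq_iff hψ]
  · rw [apply_inr_eq_iff hφ, apply_inr_eq_iff hψ]

def coreBlock (hd : ∀ t, 3 ≤ d t) : Fin k ⊕ Fin 3 → Block d k
  | .inl p => .inr p
  | .inr j => .inl fun t => ⟨j, by have := hd t; omega⟩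

theorem pairwise_blockAdj_coreBlock (hd : ∀ t, 3 ≤ d t) :
    Pairwise fun i j => BlockAdj (coreBlock (k := k) hd i) (coreBlock hd j) := by
  rintro (p | i) (q | j) hij <;> simp only [coreBlock, BlockAdj]
  · exact fun h => hij (h ▸ rfl)
  · exact fun t h => hij (congrArg _ (Fin.ext (Fin.mk.inj h)))

def blockColoring (t : T) : Block d k → ℕ
  | .inl u => u t
  | .inr p => d t + p

theorem blockColoring_ne_of_adj (t : T) {b b' : Block d k} (h : BlockAdj b b') :
    blockColoring t b ≠ blockColoring t b' := by
  rcases b with u | p <;> rcases b' with v | q <;> simp only [blockColoring]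
  · exact fun h' => h t (Fin.ext h')
  · have := (u t).isLt; omega
  · have := (v t).isLt; omega
  · exact fun h' => h (Fin.ext (by omega))

def modeColoring (d : T → ℕ) (k n : ℕ) (t : T) (x : Vertex d k n) : ℕ := blockColoring t x.1

variable [Fintype T]

def triangleEdge (n : ℕ) (u v w : Cell d) : Finset (Vertex d k n) :=
  (insert (.inl u) (insert (.inl v) (insert (.inl w) (univ.image .inr)))).image (·, 0)

def cEdges (d : T → ℕ) (k n : ℕ) : Set (Finset (Vertex d k n)) :=
  {e | #e = k + 3 ∧ ((∃ x ∈ e, ∃ y ∈ e, x ≠ y ∧ x.1 = y.1) ∨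
    ∃ u v w, u ≠ v ∧ u ≠ w ∧ v ≠ w ∧ CoordRepeats u v w ∧ e = triangleEdge n u v w)}

def dEdges (d : T → ℕ) (k n m : ℕ) : Set (Finset (Vertex d k n)) :=
  {e | #e = m ∧ ∃ x ∈ e, ∃ y ∈ e, BlockAdj x.1 y.1 ∧ ∀ z ∈ e, z.1 = x.1 ∨ z.1 = y.1}

theorem card_triangleEdge {u v w : Cell d} (huv : u ≠ v) (huw : u ≠ w) (hvw : v ≠ w) :
    #(triangleEdge (k := k) n u v w) = k + 3 := by
  rw [triangleEdge, card_image_of_injective _ fun _ _ h => (Prod.mk.inj h).1]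
  rw [card_insert_of_notMem (by simp [huv, huw]), card_insert_of_notMem (by simp [hvw]),
    card_insert_of_notMem (by simp), card_image_of_injective _ Sum.inr_injective, card_univ,
    Fintype.card_fin]

def verticesOf (n : ℕ) (b : Block d k) : Finset (Vertex d k n) := univ.image (Prod.mk b)

theorem mem_verticesOf {b : Block d k} {x : Vertex d k n} : x ∈ verticesOf n b ↔ x.1 = b := by
  simp only [verticesOf, mem_image, mem_univ, true_and]
  exact ⟨by rintro ⟨i, rfl⟩; rfl, fun h => ⟨x.2, by rw [← h]⟩⟩

theorem card_verticesOf (b : Block d k) : #(verticesOf n b) = n + 1 := by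
  rw [verticesOf, card_image_of_injective _ (Prod.mk_right_injective b), card_univ,
    Fintype.card_fin]

theorem proper_modeColoring (t : T) :
    Proper (cEdges d k n) (dEdges d k n m) (modeColoring d k n t) := by
  refine ⟨?_, ?_⟩
  · rintro e ⟨-, ⟨x, hx, y, hy, hxy, hb⟩ | ⟨u, v, w, huv, huw, hvw, hrep, rfl⟩⟩
    · exact ⟨x, hx, y, hy, hxy, by simp [modeColoring, hb]⟩
    · rcases hrep t with h | h | h
      · exact ⟨(.inl u, 0), by simp [triangleEdge], (.inl v, 0), by simp [triangleEdge],
          by simpa using huv, by simp [modeColoring, blockColoring, h]⟩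
      · exact ⟨(.inl u, 0), by simp [triangleEdge], (.inl w, 0), by simp [triangleEdge],
          by simpa using huw, by simp [modeColoring, blockColoring, h]⟩
      · exact ⟨(.inl v, 0), by simp [triangleEdge], (.inl w, 0), by simp [triangleEdge],
          by simpa using hvw, by simp [modeColoring, blockColoring, h]⟩
  · rintro e ⟨-, x, hx, y, hy, hxy, -⟩
    exact ⟨x, hx, y, hy, blockColoring_ne_of_adj t hxy⟩

section Proper

variable {c : Vertex d k n → ℕ} (hc : Proper (cEdges d k n) (dEdges d k n m) c)
include hc

theorem apply_ne_of_lt_card [Nonempty T] (hm : 2 ≤ m) {b b' : Block d k} (hbb' : BlockAdj b b')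
    {a : ℕ} (hb : m - 2 < #((verticesOf n b).filter (c · = a))) {y : Vertex d k n} (hy : y.1 = b') :
    c y ≠ a := by
  intro hya
  obtain ⟨A, hA, hAcard⟩ :=
    exists_subset_card_eq (s := (verticesOf n b).filter (c · = a)) (n := m - 1) (by omega)
  have hAb : ∀ x ∈ A, x.1 = b ∧ c x = a := fun x hx => by
    simpa [mem_verticesOf] using hA hx
  obtain ⟨x, hx⟩ : A.Nonempty := card_pos.1 (by omega)
  have hyA : y ∉ A := fun h => hbb'.ne ((hAb y h).1.symm.trans hy)
  refine hc.not_forall_eq (e := insert y A) ⟨?_, x, mem_insert_of_mem hx, y, mem_insert_self _ _,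
    by rwa [(hAb x hx).1, hy], fun z hz => ?_⟩ a fun z hz => ?_
  · rw [card_insert_of_notMem hyA]; omega
  · rcases mem_insert.1 hz with rfl | hz
    exacts [Or.inr rfl, Or.inl ((hAb z hz).1.trans (hAb x hx).1.symm)]
  · rcases mem_insert.1 hz with rfl | hz
    exacts [hya, (hAb z hz).2]

/-- With at most `k + 2` colors, every block has a color used more than `m - 2` times on it, and
adjacent blocks cannot share it. -/
theorem card_le_card_image_of_pairwise [DecidableEq T] [Nonempty T] (hm : 2 ≤ m)
    (hn : (k + 2) * (m - 2) ≤ n) (hcol : #(univ.image c) ≤ k + 2) {ι : Type} [Fintype ι]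
    {f : ι → Block d k} (hf : Pairwise fun i j => BlockAdj (f i) (f j)) :
    Fintype.card ι ≤ #(univ.image c) := by
  have hpop (b : Block d k) : ∃ a, m - 2 < #((verticesOf n b).filter (c · = a)) := by
    have hlt : #(univ.image c) * (m - 2) < #(verticesOf n b) := by
      rw [card_verticesOf]
      exact lt_of_le_of_lt (Nat.mul_le_mul_right _ hcol) (by omega)
    obtain ⟨a, -, ha⟩ := exists_lt_card_fiber_of_mul_lt_card_of_maps_to
      (fun x _ => mem_image_of_mem c (mem_univ x)) hlt
    exact ⟨a, ha⟩
  choose χ hχ using hpop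
  have hχc (b : Block d k) : ∃ y : Vertex d k n, y.1 = b ∧ c y = χ b := by
    obtain ⟨y, hy⟩ := card_pos.1 (lt_of_le_of_lt (Nat.zero_le _) (hχ b))
    exact ⟨y, by simpa [mem_verticesOf] using hy⟩
  rw [← card_univ]
  refine card_le_card_of_injOn (χ ∘ f) (fun i _ => ?_) (fun i _ j _ hij => ?_)
  · obtain ⟨y, -, hy⟩ := hχc (f i)
    rw [Function.comp_apply, ← hy]
    exact mem_image_of_mem c (mem_univ y)
  · by_contra hne
    obtain ⟨y, hy, hyc⟩ := hχc (f j)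
    exact apply_ne_of_lt_card hc hm (hf hne) (hχ (f i)) hy (hyc.trans hij.symm)

theorem add_three_le_card_image [DecidableEq T] [Nonempty T] (hd : ∀ t, 3 ≤ d t) (hm : 2 ≤ m)
    (hn : (k + 2) * (m - 2) ≤ n) :
    k + 3 ≤ #(univ.image c) := by
  by_contra hlt
  have := card_le_card_image_of_pairwise hc hm hn (by omega) (pairwise_blockAdj_coreBlock hd)
  simp only [Fintype.card_sum, Fintype.card_fin] at this
  omega

/-- Two vertices of one block with distinct colors, together with `k + 1` vertices of further
distinct colors, would form a rainbow `C`-edge. -/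
theorem apply_eq_of_fst_eq [DecidableEq T] (hcol : k + 3 ≤ #(univ.image c)) {x y : Vertex d k n}
    (hxy : x.1 = y.1) : c x = c y := by
  by_contra hne
  have hxy' : x ≠ y := fun h => hne (h ▸ rfl)
  let s := univ.filter fun z => c z ≠ c x ∧ c z ≠ c y
  have hs : k + 1 ≤ #(s.image c) := by
    have hsub : univ.image c ⊆ insert (c x) (insert (c y) (s.image c)) := by
      intro a ha
      obtain ⟨z, -, rfl⟩ := mem_image.1 ha
      by_cases h₁ : c z = c x
      · simp [h₁]
      by_cases h₂ : c z = c y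
      · simp [h₂]
      exact mem_insert_of_mem (mem_insert_of_mem (mem_image_of_mem c (by simp [s, h₁, h₂])))
    have := (card_le_card hsub).trans (card_insert_le _ _)
    have := card_insert_le (c y) (s.image c)
    omega
  obtain ⟨R, hRs, hR, hRinj⟩ := exists_subset_injOn_of_le_card_image hs
  have hRc : ∀ z ∈ R, c z ≠ c x ∧ c z ≠ c y := fun z hz => by simpa [s] using hRs hz
  have hyR : y ∉ R := fun h => (hRc y h).2 rfl
  have hxR : x ∉ insert y R := by simpa [hxy'] using fun h => (hRc x h).1 rfl
  refine hc.not_injOn (e := insert x (insert y R))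
    ⟨?_, Or.inl ⟨x, mem_insert_self _ _, y, by simp, hxy', hxy⟩⟩ ?_
  · rw [card_insert_of_notMem hxR, card_insert_of_notMem hyR, hR]
  rw [coe_insert, coe_insert, Set.injOn_insert (by simpa using hxR),
    Set.injOn_insert (by simpa using hyR)]
  refine ⟨⟨hRinj, fun ⟨z, hz, hzy⟩ => (hRc z hz).2 hzy⟩, ?_⟩
  rintro ⟨z, rfl | hz, hzx⟩
  exacts [hne hzx.symm, (hRc z hz).1 hzx]

theorem apply_ne_of_adj [Nonempty T] (hm : 2 ≤ m) (hn : m - 2 ≤ n)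
    (hblock : ∀ x y : Vertex d k n, x.1 = y.1 → c x = c y) {x y : Vertex d k n}
    (hxy : BlockAdj x.1 y.1) : c x ≠ c y := by
  refine (apply_ne_of_lt_card hc hm hxy (a := c x) ?_ rfl).symm
  rw [filter_true_of_mem fun z hz => hblock z x (mem_verticesOf.1 hz), card_verticesOf]
  omega

/-- Of two vertices of equal color in a triangle edge, neither lies in an extra block, since
those are adjacent to all other blocks. -/
theorem isGridColoring (hadj : ∀ x y : Vertex d k n, BlockAdj x.1 y.1 → c x ≠ c y) :
    IsGridColoring fun u : Cell d => c (.inl u, 0) where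
  ne_of_forall_ne u v huv := hadj (.inl u, 0) (.inl v, 0) huv
  eq_of_coordRepeats u v w huv huw hvw hrep := by
    obtain ⟨p, hp, q, hq, hpq, hcpq⟩ := hc.1 _
      ⟨card_triangleEdge huv huw hvw, Or.inr ⟨u, v, w, huv, huw, hvw, hrep, rfl⟩⟩
    simp only [triangleEdge, mem_image, mem_insert, mem_univ, true_and] at hp hq
    obtain ⟨b, hb, rfl⟩ := hp
    obtain ⟨b', hb', rfl⟩ := hq
    rcases hb with rfl | rfl | rfl | ⟨p, rfl⟩ <;> rcases hb' with rfl | rfl | rfl | ⟨q, rfl⟩ <;>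
      first
      | exact absurd rfl hpq
      | exact absurd hcpq (hadj _ _ trivial)
      | exact absurd hcpq (hadj _ _ fun h => hpq (h ▸ rfl))
      | simp [hcpq]

theorem exists_modeColoring [DecidableEq T] [Nonempty T] (hd : ∀ t, 3 ≤ d t) (hm : 2 ≤ m)
    (hn : (k + 2) * (m - 2) ≤ n) :
    ∃ t, ∀ x y, c x = c y ↔ modeColoring d k n t x = modeColoring d k n t y := by
  have hblock (x y : Vertex d k n) : x.1 = y.1 → c x = c y :=
    apply_eq_of_fst_eq hc (add_three_le_card_image hc hd hm hn)
  have hn' : m - 2 ≤ n := le_trans (Nat.le_mul_of_pos_left _ (by omega)) hn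
  have hadj (x y : Vertex d k n) : BlockAdj x.1 y.1 → c x ≠ c y :=
    apply_ne_of_adj hc hm hn' hblock
  obtain ⟨ts, hts⟩ := (isGridColoring hc hadj).exists_apply_eq_iff hd
  refine ⟨ts, fun x y => ?_⟩
  rw [hblock x (x.1, 0) rfl, hblock y (y.1, 0) rfl]
  exact apply_eq_iff_of_forall_adj (fun b b' h => hadj (b, 0) (b', 0) h)
    (fun _ _ => blockColoring_ne_of_adj ts) (fun u v => (hts u v).trans Fin.val_inj.symm) x.1 y.1

end Proper

variable [DecidableEq T]

theorem card_image_modeColoring (hd : ∀ t, 0 < d t) (t : T) :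
    #(univ.image (modeColoring d k n t)) = d t + k := by
  suffices univ.image (modeColoring d k n t) = range (d t + k) by
    rw [this, card_range]
  ext a
  simp only [mem_image, mem_univ, true_and, mem_range]
  constructor
  · rintro ⟨⟨u | p, -⟩, rfl⟩ <;> simp only [modeColoring, blockColoring]
    · have := (u t).isLt; omega
    · omega
  · intro ha
    by_cases hat : a < d t
    · exact ⟨(.inl (Function.update (fun t => ⟨0, hd t⟩) t ⟨a, hat⟩), 0),
        by simp [modeColoring, blockColoring]⟩
    · exact ⟨(.inr ⟨a - d t, by omega⟩, 0), by simp only [modeColoring, blockColoring]; omega⟩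

theorem injective_colorClasses_modeColoring (hd : ∀ t, 1 < d t) :
    Function.Injective fun t : T => colorClasses (modeColoring d k n t) := by
  intro t t' h
  by_contra hne
  let x₀ : Cell d := fun t => ⟨0, by have := hd t; omega⟩
  have := (colorClasses_eq_iff.1 h (.inl x₀, 0) (.inl (Function.update x₀ t' ⟨1, hd t'⟩), 0)).1
  simp [modeColoring, blockColoring, hne, x₀] at this

theorem setOf_colorClasses_eq [Nonempty T] (hd : ∀ t, 3 ≤ d t) (hm : 2 ≤ m)
    (hn : (k + 2) * (m - 2) ≤ n) (s : ℕ) :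
    {P | ∃ c : Vertex d k n → ℕ, Proper (cEdges d k n) (dEdges d k n m) c ∧ UsesExactly c s ∧
        colorClasses c = P} =
      ((univ.filter fun t => d t + k = s).image fun t => colorClasses (modeColoring d k n t)) := by
  have hd₀ (t : T) : 0 < d t := by have := hd t; omega
  ext P
  simp only [Set.mem_ofPred_eq, coe_image, coe_filter, Set.mem_image, mem_univ, true_and]
  constructor
  · rintro ⟨c, hc, hs, rfl⟩
    obtain ⟨t, ht⟩ := exists_modeColoring hc hd hm hn
    refine ⟨t, ?_, (colorClasses_eq_iff.2 ht).symm⟩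
    unfold UsesExactly at hs
    rw [← hs, ← card_colorClasses, colorClasses_eq_iff.2 ht, card_colorClasses,
      card_image_modeColoring hd₀]
  · rintro ⟨t, ht, rfl⟩
    exact ⟨_, proper_modeColoring t, (card_image_modeColoring hd₀ t).trans ht, rfl⟩

theorem exists_proper_usesExactly_iff [Nonempty T] (hd : ∀ t, 3 ≤ d t) (hm : 2 ≤ m)
    (hn : (k + 2) * (m - 2) ≤ n) (s : ℕ) :
    (∃ c : Vertex d k n → ℕ, Proper (cEdges d k n) (dEdges d k n m) c ∧ UsesExactly c s) ↔
      ∃ t, d t + k = s := by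
  have h := congrArg Set.Nonempty (setOf_colorClasses_eq hd hm hn s)
  simpa [Set.Nonempty] using h

theorem ncard_setOf_colorClasses [Nonempty T] (hd : ∀ t, 3 ≤ d t) (hm : 2 ≤ m)
    (hn : (k + 2) * (m - 2) ≤ n) (s : ℕ) :
    {P | ∃ c : Vertex d k n → ℕ, Proper (cEdges d k n) (dEdges d k n m) c ∧ UsesExactly c s ∧
        colorClasses c = P}.ncard = #(univ.filter fun t => d t + k = s) := by
  rw [setOf_colorClasses_eq hd hm hn, Set.ncard_coe_finset, card_image_of_injective _
    (injective_colorClasses_modeColoring fun t => by have := hd t; omega)]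

end GridHypergraph

theorem card_filter_sigma_fst_eq {ι : Type} [Fintype ι] [DecidableEq ι] (r : ι → ℕ) (a : ι) :
    #(univ.filter fun t : Σ i, Fin (r i) => t.1 = a) = r a := by
  rw [show univ.filter (fun t : Σ i, Fin (r i) => t.1 = a) = ({a} : Finset ι).sigma fun _ => univ
    by ext ⟨i, x⟩; simp, card_sigma, sum_singleton, card_univ, Fintype.card_fin]

open GridHypergraph in
theorem stmt18 (ℓ m : ℕ) (hl : 3 ≤ ℓ) (hm : 2 ≤ m) (S : Finset ℕ)
    (hS : ∀ s ∈ S, ℓ ≤ s) (r : ℕ → ℕ) (hr : ∀ s ∈ S, 0 < r s) :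
    ∃ (V : Type) (_ : Fintype V) (_ : DecidableEq V) (C D : Set (Finset V)),
      (∀ e ∈ C, e.card = ℓ) ∧ (∀ e ∈ D, e.card = m) ∧
      (∀ s : ℕ, (∃ c : V → ℕ, Proper C D c ∧ UsesExactly c s) ↔ s ∈ S) ∧
      (∀ s ∈ S,
        {P : Finset (Finset V) |
          ∃ c : V → ℕ, Proper C D c ∧ UsesExactly c s ∧ colorClasses c = P}.ncard
          = r s) := by
  rcases S.eq_empty_or_nonempty with rfl | ⟨s₀, hs₀⟩
  · refine ⟨Fin ((ℓ - 1) * (m - 1) + 1), inferInstance, inferInstance, {e | #e = ℓ}, {e | #e = m},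
      fun e he => he, fun e he => he, fun s => ?_, by simp⟩
    exact iff_of_false (fun ⟨c, hc, _⟩ => not_proper_of_mul_lt_card (by simp) c hc)
      (notMem_empty s)
  -- The modes are the pairs `(s, i)` with `i < r s`; mode `(s, i)` uses `s` colors.
  have : Nonempty (Σ s : S, Fin (r s)) := ⟨⟨⟨s₀, hs₀⟩, ⟨0, hr s₀ hs₀⟩⟩⟩
  have hd (t : Σ s : S, Fin (r s)) : 3 ≤ t.1 - (ℓ - 3) := by have := hS t.1 t.1.2; omega
  have hdk (t : Σ s : S, Fin (r s)) (s : ℕ) : t.1 - (ℓ - 3) + (ℓ - 3) = s ↔ t.1 = s := by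
    have := hS t.1 t.1.2; omega
  refine ⟨Vertex (fun t : Σ s : S, Fin (r s) => t.1 - (ℓ - 3)) (ℓ - 3) ((ℓ - 3 + 2) * (m - 2)),
    inferInstance, inferInstance, cEdges _ _ _, dEdges _ _ _ m, fun e he => he.1.trans (by omega),
    fun e he => he.1, fun s => ?_, fun s hs => ?_⟩
  · rw [exists_proper_usesExactly_iff hd hm le_rfl]
    simp only [hdk]
    exact ⟨fun ⟨t, ht⟩ => ht ▸ t.1.2, fun hs => ⟨⟨⟨s, hs⟩, ⟨0, hr s hs⟩⟩, rfl⟩⟩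
  · rw [ncard_setOf_colorClasses hd hm le_rfl]
    simp only [hdk]
    convert card_filter_sigma_fst_eq (fun a : S => r a) ⟨s, hs⟩ using 4
    exact ⟨fun h => Subtype.ext h, fun h => h ▸ rfl⟩
end

section
/- Let ℓ ≥ 3, m ≥ 2, and 2 ≤ a ≤ ℓ - 1. Then there exists an (ℓ, m)-uniform mixed hypergraph H with feasible set exactly [a, ℓ - 1]. Concretely, H is obtained from H(ℓ, m, a, b) for any b ≥ ℓ by adding one extra D-edge contained in a column but in no row; then S(H) = [a, ℓ - 1]. -/
/-- Auxiliary: a subset of prescribed size containing two given elements. -/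
lemma exists_subset_card_eq_mem {V : Type} [DecidableEq V] {S : Finset V} {p q : V}
    (hp : p ∈ S) (hq : q ∈ S) (hpq : p ≠ q) {n : ℕ} (hn : n ≤ S.card) (h2 : 2 ≤ n) :
    ∃ T, T ⊆ S ∧ T.card = n ∧ p ∈ T ∧ q ∈ T := by
  have hsub : ({p, q} : Finset V) ⊆ S := by
    intro x hx
    simp only [Finset.mem_insert, Finset.mem_singleton] at hx
    rcases hx with rfl | rfl <;> assumption
  have hcard2 : ({p, q} : Finset V).card = 2 := Finset.card_pair hpq
  have hle : n - 2 ≤ (S \ {p, q}).card := by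
    rw [Finset.card_sdiff_of_subset hsub, hcard2]; omega
  obtain ⟨T', hT'sub, hT'card⟩ := Finset.exists_subset_card_eq hle
  refine ⟨T' ∪ {p, q}, ?_, ?_, ?_, ?_⟩
  · exact Finset.union_subset (hT'sub.trans Finset.sdiff_subset) hsub
  · rw [Finset.card_union_of_disjoint
      (Finset.disjoint_of_subset_left hT'sub Finset.sdiff_disjoint), hT'card, hcard2]
    omega
  · simp
  · simp

/-- The auxiliary coloring used in the existence direction. -/
def colr (a s : ℕ) {b m : ℕ} (p : Fin a × Fin b × Fin m) : ℕ :=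
  if p.1.val < a - 1 then p.1.val else (a - 1) + min p.2.1.val (s - a)

theorem stmt19 (ℓ m a b : ℕ) (hl : 3 ≤ ℓ) (hm : 2 ≤ m)
    (ha2 : 2 ≤ a) (hal : a ≤ ℓ - 1) (hlb : ℓ ≤ b)
    (e₀ : Finset (Fin a × Fin b × Fin m)) (he₀card : e₀.card = m)
    (he₀col : ∃ y, ∀ p ∈ e₀, p.2.1 = y)
    (he₀row : ¬ ∃ x, ∀ p ∈ e₀, p.1 = x) :
    ∀ s : ℕ,
      (∃ c : Fin a × Fin b × Fin m → ℕ,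
          Proper (gridC a b m ℓ) (gridD a b m ∪ {e₀}) c ∧ UsesExactly c s) ↔
      (a ≤ s ∧ s ≤ ℓ - 1) := by
  classical
  intro s
  have hb : ℓ ≤ b := hlb
  have hab : a < b := by omega
  constructor
  · rintro ⟨c, ⟨hC, hD⟩, hs⟩
    unfold UsesExactly at hs
    constructor
    · -- a ≤ s
      by_contra hlt
      push_neg at hlt
      have hmaps : ∀ p ∈ (Finset.univ : Finset (Fin a × Fin b × Fin m)),
          c p ∈ Finset.univ.image c := fun p hp => Finset.mem_image_of_mem c hp
      have hcardV : (Finset.univ : Finset (Fin a × Fin b × Fin m)).card = a * b * m := by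
        simp [mul_assoc]
      have hmul : (Finset.univ.image c).card * (b * m) <
          (Finset.univ : Finset (Fin a × Fin b × Fin m)).card := by
        rw [hcardV, hs]
        have h1 : s * (b * m) ≤ (a - 1) * (b * m) :=
          Nat.mul_le_mul_right _ (by omega)
        have hbm : 0 < b * m := Nat.mul_pos (by omega) (by omega)
        have h2 : (a - 1) * (b * m) < a * (b * m) :=
          (Nat.mul_lt_mul_right hbm).mpr (by omega)
        calc s * (b * m) ≤ (a - 1) * (b * m) := h1
          _ < a * (b * m) := h2
          _ = a * b * m := by ring
      obtain ⟨t, _, hbig⟩ := Finset.exists_lt_card_fiber_of_mul_lt_card_of_maps_to hmaps hmul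
      set F := Finset.univ.filter (fun x => c x = t) with hF
      have hFc : ∀ p ∈ F, c p = t := fun p hp => (Finset.mem_filter.mp hp).2
      have hmF : m ≤ F.card := by
        have : m ≤ b * m := Nat.le_mul_of_pos_left m (by omega)
        omega
      -- no two elements of F differ in both row and column
      have key : ∀ u ∈ F, ∀ v ∈ F, u.1 ≠ v.1 → u.2.1 = v.2.1 := by
        intro u hu v hv huv
        by_contra hcol
        have huvne : u ≠ v := fun h => huv (by rw [h])
        obtain ⟨T, hTs, hTc, hpT, hqT⟩ := exists_subset_card_eq_mem hu hv huvne hmF hm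
        have hTD : T ∈ gridD a b m := by
          refine ⟨hTc, ?_, ?_⟩
          · rintro ⟨x, hx⟩; exact huv ((hx u hpT).trans (hx v hqT).symm)
          · rintro ⟨y, hy⟩; exact hcol ((hy u hpT).trans (hy v hqT).symm)
        obtain ⟨u', hu', v', hv', hne⟩ := hD T (Or.inl hTD)
        exact hne ((hFc u' (hTs hu')).trans (hFc v' (hTs hv')).symm)
      -- F is not contained in one row
      have hnotrow : ¬ ∀ p ∈ F, ∀ q ∈ F, p.1 = q.1 := by
        intro hrow
        have hle : F.card ≤ b * m := by
          have hinj : Set.InjOn (fun p : Fin a × Fin b × Fin m => p.2) ↑F := by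
            intro p hp q hq h2
            exact Prod.ext (hrow p (Finset.mem_coe.mp hp) q (Finset.mem_coe.mp hq)) h2
          have := Finset.card_le_card_of_injOn (s := F)
            (t := (Finset.univ : Finset (Fin b × Fin m)))
            (fun p : Fin a × Fin b × Fin m => p.2) (fun p _ => Finset.mem_univ p.2) hinj
          simpa using this
        omega
      push_neg at hnotrow
      obtain ⟨u, hu, v, hv, huv⟩ := hnotrow
      have hy0 : u.2.1 = v.2.1 := key u hu v hv huv
      -- F is not contained in one column
      have hnotcol : ¬ ∀ p ∈ F, p.2.1 = u.2.1 := by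
        intro hcol
        have hle : F.card ≤ a * m := by
          have hinj : Set.InjOn (fun p : Fin a × Fin b × Fin m => (p.1, p.2.2)) ↑F := by
            intro p hp q hq h2
            have h2' : (p.1, p.2.2) = (q.1, q.2.2) := h2
            have h1 : p.1 = q.1 := (Prod.mk.inj h2').1
            have h3 : p.2.2 = q.2.2 := (Prod.mk.inj h2').2
            have h4 : p.2.1 = q.2.1 := by
              rw [hcol p (Finset.mem_coe.mp hp), hcol q (Finset.mem_coe.mp hq)]
            exact Prod.ext h1 (Prod.ext h4 h3)
          have := Finset.card_le_card_of_injOn (s := F)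
            (t := (Finset.univ : Finset (Fin a × Fin m)))
            (fun p : Fin a × Fin b × Fin m => (p.1, p.2.2))
            (fun p _ => Finset.mem_univ (p.1, p.2.2)) hinj
          simpa using this
        have : a * m ≤ b * m := Nat.mul_le_mul_right _ (by omega)
        omega
      push_neg at hnotcol
      obtain ⟨r, hr, hry⟩ := hnotcol
      by_cases hru : r.1 = u.1
      · have : r.1 ≠ v.1 := by rw [hru]; exact huv
        have := key r hr v hv this
        exact hry (this.trans hy0.symm)
      · exact hry (key r hr u hu hru)
    · -- s ≤ ℓ - 1
      by_contra hgt
      push_neg at hgt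
      have hls : ℓ ≤ s := by omega
      have colmono : ∀ u v : Fin a × Fin b × Fin m, u.2.1 = v.2.1 → c u = c v := by
        intro u v hcoleq
        by_contra hne
        have hcu : c u ∈ Finset.univ.image c := Finset.mem_image_of_mem c (Finset.mem_univ u)
        have hcv : c v ∈ Finset.univ.image c := Finset.mem_image_of_mem c (Finset.mem_univ v)
        obtain ⟨T, hTs, hTc, hut, hvt⟩ :=
          exists_subset_card_eq_mem (n := ℓ) hcu hcv hne (by rw [hs]; exact hls) (by omega)
        let f : ℕ → Fin a × Fin b × Fin m := fun t =>
          if t = c u then u else if t = c v then v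
          else if h : ∃ w, c w = t then h.choose else u
        have hf : ∀ t ∈ T, c (f t) = t := by
          intro t ht
          by_cases h1 : t = c u
          · simp [f, h1]
          by_cases h2 : t = c v
          · have hvu : ¬ (c v = c u) := fun h => hne h.symm
            simp [f, h1, h2, hvu]
          have hex : ∃ w, c w = t := by
            have := hTs ht
            simp only [Finset.mem_image] at this
            obtain ⟨w, _, hw⟩ := this
            exact ⟨w, hw⟩
          simp only [f, if_neg h1, if_neg h2, dif_pos hex]
          exact hex.choose_spec
        have hinj : Set.InjOn f ↑T := by
          intro x hx y hy hxy
          have := hf x (Finset.mem_coe.mp hx)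
          rw [hxy, hf y (Finset.mem_coe.mp hy)] at this
          exact this.symm
        have hcard : (T.image f).card = ℓ := by
          rw [Finset.card_image_of_injOn hinj, hTc]
        have hfu : f (c u) = u := by simp [f]
        have hfv : f (c v) = v := by simp [f, Ne.symm hne]
        have hue : u ∈ T.image f := by
          rw [← hfu]; exact Finset.mem_image_of_mem f hut
        have hve : v ∈ T.image f := by
          rw [← hfv]; exact Finset.mem_image_of_mem f hvt
        have hCe : T.image f ∈ gridC a b m ℓ :=
          ⟨hcard, u, hue, v, hve, fun h => hne (by rw [h]), hcoleq⟩
        obtain ⟨p, hp, q, hq, hpq, hcpq⟩ := hC _ hCe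
        obtain ⟨t₁, ht₁, hft₁⟩ := Finset.mem_image.mp hp
        obtain ⟨t₂, ht₂, hft₂⟩ := Finset.mem_image.mp hq
        have : t₁ = t₂ := by
          rw [← hf t₁ ht₁, ← hf t₂ ht₂, hft₁, hft₂, hcpq]
        exact hpq (by rw [← hft₁, ← hft₂, this])
      obtain ⟨u, hu, v, hv, hne⟩ := hD e₀ (Or.inr rfl)
      obtain ⟨y, hy⟩ := he₀col
      exact hne (colmono u v ((hy u hu).trans (hy v hv).symm))
  · rintro ⟨has, hsl⟩
    refine ⟨colr a s, ⟨?_, ?_⟩, ?_⟩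
    · -- C-edges
      intro e he
      obtain ⟨hcard, _⟩ := he
      have hmaps : ∀ p ∈ e, colr a s p ∈ Finset.range s := by
        intro p _
        rw [Finset.mem_range]
        unfold colr
        have h1 := p.1.isLt
        have h2 : min p.2.1.val (s - a) ≤ s - a := min_le_right _ _
        split <;> omega
      have hlt : (Finset.range s).card < e.card := by
        rw [Finset.card_range, hcard]; omega
      exact Finset.exists_ne_map_eq_of_card_lt_of_maps_to hlt hmaps
    · -- D-edges
      have hrowsep : ∀ p q : Fin a × Fin b × Fin m, p.1 ≠ q.1 → colr a s p ≠ colr a s q := by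
        intro p q h
        unfold colr
        have h1 := p.1.isLt
        have h2 := q.1.isLt
        have hv : p.1.val ≠ q.1.val := fun he => h (Fin.val_injective he)
        have h3 : min p.2.1.val (s - a) ≤ s - a := min_le_right _ _
        have h4 : min q.2.1.val (s - a) ≤ s - a := min_le_right _ _
        split <;> split <;> omega
      have hDgen : ∀ e : Finset (Fin a × Fin b × Fin m), e.card = m →
          (¬ ∃ x, ∀ p ∈ e, p.1 = x) → ∃ u ∈ e, ∃ v ∈ e, colr a s u ≠ colr a s v := by
        intro e hcard hrow
        have hne : e.Nonempty := Finset.card_pos.mp (by omega)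
        obtain ⟨p₀, hp₀⟩ := hne
        push_neg at hrow
        obtain ⟨q, hq, hq1⟩ := hrow p₀.1
        exact ⟨q, hq, p₀, hp₀, hrowsep q p₀ hq1⟩
      intro e he
      rcases he with hD | hE
      · exact hDgen e hD.1 hD.2.1
      · rw [Set.mem_singleton_iff] at hE
        subst hE
        exact hDgen e he₀card he₀row
    · -- UsesExactly
      unfold UsesExactly
      have himg : Finset.univ.image (colr a s (b := b) (m := m)) = Finset.range s := by
        apply Finset.Subset.antisymm
        · intro t ht
          rw [Finset.mem_image] at ht
          obtain ⟨p, _, hp⟩ := ht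
          rw [Finset.mem_range, ← hp]
          unfold colr
          have h1 := p.1.isLt
          have h2 : min p.2.1.val (s - a) ≤ s - a := min_le_right _ _
          split <;> omega
        · intro j hj
          rw [Finset.mem_range] at hj
          rw [Finset.mem_image]
          by_cases hja : j < a - 1
          · refine ⟨(⟨j, by omega⟩, ⟨0, by omega⟩, ⟨0, by omega⟩), Finset.mem_univ _, ?_⟩
            simp [colr, hja]
          · refine ⟨(⟨a - 1, by omega⟩, ⟨j - (a - 1), by omega⟩, ⟨0, by omega⟩),
              Finset.mem_univ _, ?_⟩
            simp [colr]
            omega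
      rw [himg, Finset.card_range]
end
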